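/- arXiv:2310.14258 — 9 statements merged into one kernel-verified Lean document; each statement's English description precedes it below -/
import Mathlib

section
/- Let k_o > 0, let α : ℝ → ℝ be continuous and bounded, and let d : ℝ → ℝ be twice differentiable with d(0) > 0. Suppose the barrier ODE d''(t) = −k_o·d'(t)/d(t) − α(t) holds at every t ≥ 0 at which d(t) > 0. Then d(t) > 0 for all t ≥ 0. -/
/-!
Along a positive solution, `w = d' + k_o log d` satisfies `w' = -α`, so `w` stays bounded below
up to the first zero `T` of `d`. Then `d' ≥ C - k_o log d → +∞` as `d → 0⁺`, so `d` is increasing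
just before `T`, which is incompatible with `d > 0` on `[0, T)` and `d T = 0`.
-/

open Filter Set Topology Real

theorem Continuous.exists_zero_and_pos_on_Ico {f : ℝ → ℝ} (hf : Continuous f) {a b : ℝ}
    (ha : 0 < f a) (hab : a ≤ b) (hb : f b ≤ 0) :
    ∃ T, a < T ∧ f T = 0 ∧ ∀ t ∈ Ico a T, 0 < f t := by
  set S := Icc a b ∩ f ⁻¹' Iic 0
  have hS : IsClosed S := isClosed_Icc.inter (isClosed_Iic.preimage hf)
  have hSbdd : BddBelow S := ⟨a, fun t ht => ht.1.1⟩
  have hTS : sInf S ∈ S := hS.csInf_mem ⟨b, ⟨hab, le_rfl⟩, hb⟩ hSbdd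
  have hpos : ∀ t ∈ Ico a (sInf S), 0 < f t := fun t ht => by
    by_contra! hft
    exact (csInf_le hSbdd ⟨⟨ht.1, ht.2.le.trans hTS.1.2⟩, hft⟩).not_gt ht.2
  have haT : a < sInf S := hTS.1.1.lt_of_ne fun h => (h ▸ hTS.2 : f a ≤ 0).not_gt ha
  have hT_nonneg : 0 ≤ f (sInf S) :=
    (isClosed_le continuous_const hf).closure_subset_iff.2 (fun t ht => (hpos t ht).le)
      (closure_Ico haT.ne ▸ right_mem_Icc.2 haT.le)
  exact ⟨sInf S, haT, le_antisymm hTS.2 hT_nonneg, hpos⟩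

theorem hasDerivAt_deriv_add_mul_log {d : ℝ → ℝ} {t : ℝ} (k : ℝ)
    (hd : DifferentiableAt ℝ d t) (hd' : DifferentiableAt ℝ (deriv d) t) (hpos : 0 < d t) :
    HasDerivAt (fun s => deriv d s + k * log (d s))
      (deriv (deriv d) t + k * (deriv d t / d t)) t :=
  hd'.hasDerivAt.add ((hd.hasDerivAt.log hpos.ne').const_mul k)

theorem mul_sub_le_image_sub_of_le_hasDerivAt_Ico {w w' : ℝ → ℝ} {a b C : ℝ}
    (hw : ∀ t ∈ Ico a b, HasDerivAt w (w' t) t) (hC : ∀ t ∈ Ico a b, C ≤ w' t) :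
    ∀ t ∈ Ico a b, C * (t - a) ≤ w t - w a := by
  intro t ht
  refine (convex_Ico a b).mul_sub_le_image_sub_of_le_deriv
    (fun s hs => (hw s hs).continuousAt.continuousWithinAt)
    (fun s hs => (hw s (interior_subset hs)).differentiableAt.differentiableWithinAt)
    (fun s hs => ?_) a (left_mem_Ico.2 (ht.1.trans_lt ht.2)) t ht ht.1
  rw [(hw s (interior_subset hs)).deriv]
  exact hC s (interior_subset hs)

theorem eventually_pos_of_le_sub_mul_log {ι : Type*} {l : Filter ι} {d d' : ι → ℝ}
    {k C : ℝ} (hk : 0 < k) (hd : Tendsto d l (𝓝[>] 0))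
    (hd' : ∀ᶠ i in l, C - k * log (d i) ≤ d' i) : ∀ᶠ i in l, 0 < d' i := by
  have hlog : Tendsto (fun i => C - k * log (d i)) l atTop := by
    simpa only [sub_eq_add_neg, Function.comp_def] using tendsto_atTop_add_const_left l C
      (tendsto_neg_atBot_atTop.comp ((tendsto_log_nhdsGT_zero.comp hd).const_mul_atBot hk))
  filter_upwards [hlog.eventually_gt_atTop 0, hd'] with i hi hi' using hi.trans_le hi'

theorem pos_of_eventually_deriv_pos {d : ℝ → ℝ} (hd : Continuous d) {T : ℝ}
    (hpos : ∀ᶠ t in 𝓝[<] T, 0 < d t) (hderiv : ∀ᶠ t in 𝓝[<] T, 0 < deriv d t) : 0 < d T := by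
  obtain ⟨s, hsT, hs⟩ := mem_nhdsLT_iff_exists_Ioo_subset.1 (hpos.and hderiv)
  obtain ⟨u, hsu, huT⟩ := exists_between hsT.out
  have hmono : StrictMonoOn d (Icc u T) :=
    strictMonoOn_of_deriv_pos (convex_Icc u T) hd.continuousOn fun x hx => by
      rw [interior_Icc] at hx
      exact (hs ⟨hsu.trans hx.1, hx.2⟩).2
  exact (hs ⟨hsu, huT⟩).1.trans (hmono (left_mem_Icc.2 huT.le) (right_mem_Icc.2 huT.le) huT)

theorem barrier_remains_positive_general
    (k_o : ℝ) (hk : 0 < k_o) (α d : ℝ → ℝ)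
    (hα_bdd : ∃ M, ∀ t, |α t| ≤ M)
    (hd1 : Differentiable ℝ d) (hd2 : Differentiable ℝ (deriv d))
    (hd0 : 0 < d 0)
    (hode : ∀ t ≥ (0:ℝ), 0 < d t →
      deriv (deriv d) t = -k_o * deriv d t / d t - α t) :
    ∀ t ≥ (0:ℝ), 0 < d t := by
  intro t₀ ht₀
  by_contra! hdt₀
  obtain ⟨M, hM⟩ := hα_bdd
  obtain ⟨T, hT, hdT, hpos⟩ := hd1.continuous.exists_zero_and_pos_on_Ico hd0 ht₀ hdt₀
  set w := fun s => deriv d s + k_o * log (d s)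
  have hw : ∀ t ∈ Ico 0 T, HasDerivAt w (-α t) t := fun t ht => by
    convert hasDerivAt_deriv_add_mul_log k_o (hd1 t) (hd2 t) (hpos t ht) using 1
    rw [hode t ht.1 (hpos t ht)]
    field_simp
    ring
  have hw_ge : ∀ t ∈ Ico 0 T, -M * (t - 0) ≤ w t - w 0 :=
    mul_sub_le_image_sub_of_le_hasDerivAt_Ico hw fun t _ => neg_le_neg (le_of_abs_le (hM t))
  have hderiv_ge : ∀ t ∈ Ico 0 T, (w 0 - M * T) - k_o * log (d t) ≤ deriv d t := fun t ht => by
    have hMt : M * t ≤ M * T := mul_le_mul_of_nonneg_left ht.2.le ((abs_nonneg _).trans (hM 0))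
    linarith [hw_ge t ht]
  have hIco : Ico 0 T ∈ 𝓝[<] T := Ico_mem_nhdsLT hT
  have hd_to_zero : Tendsto d (𝓝[<] T) (𝓝[>] 0) :=
    tendsto_nhdsWithin_iff.2 ⟨hdT ▸ hd1.continuous.continuousWithinAt,
      mem_of_superset hIco hpos⟩
  exact (pos_of_eventually_deriv_pos hd1.continuous (mem_of_superset hIco hpos)
    (eventually_pos_of_le_sub_mul_log hk hd_to_zero (mem_of_superset hIco hderiv_ge))).ne' hdT

/-- Item 1 of Lemma 1 (barrier lemma): under the barrier ODE
`d'' = -k_o * d'/d - α` with `α` continuous and bounded, `k_o > 0`, and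
`d 0 > 0`, the distance `d` remains positive for all `t ≥ 0`. -/
theorem barrier_remains_positive
    (k_o : ℝ) (hk : 0 < k_o) (α d : ℝ → ℝ)
    (hα_cont : Continuous α) (hα_bdd : ∃ M, ∀ t, |α t| ≤ M)
    (hd1 : Differentiable ℝ d) (hd2 : Differentiable ℝ (deriv d))
    (hd0 : 0 < d 0)
    (hode : ∀ t ≥ (0:ℝ), 0 < d t →
      deriv (deriv d) t = -k_o * deriv d t / d t - α t) :
    ∀ t ≥ (0:ℝ), 0 < d t :=
  barrier_remains_positive_general k_o hk α d hα_bdd hd1 hd2 hd0 hode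
end

section
/- Let k_o > 0, let α : ℝ → ℝ be continuous and bounded, and let d : ℝ → ℝ be twice differentiable with d(0) > 0 and d(t) > 0 for all t ≥ 0, satisfying d''(t) = −k_o·d'(t)/d(t) − α(t) for all t ≥ 0. If d(t) → 0 as t → ∞, then ∫₀ᵗ α(τ) dτ → +∞ as t → ∞. -/
/-!
Along a solution, the energy `E = d' + k_o log d` satisfies `E' = -α`, so `∫₀ᵗ α = E 0 - E t` and
it suffices to show `E t → -∞`. Since `α` is bounded, `E` grows at most linearly, hence
`E t ≤ E ξ + M` for the mean-value point `ξ ∈ (t - 1, t)` with `d' ξ = d t - d (t - 1)`. There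
`d' ξ → 0` while `k_o log d ξ → -∞`, because `d → 0⁺`.
-/

open Filter Set Topology

/-- The barrier equation `d'' = -k d' / d - α` says exactly that this energy has derivative `-α`. -/
noncomputable def barrierEnergy (k : ℝ) (d : ℝ → ℝ) (t : ℝ) : ℝ :=
  deriv d t + k * Real.log (d t)

theorem hasDerivAt_barrierEnergy {k t : ℝ} {d : ℝ → ℝ} (hd : DifferentiableAt ℝ d t)
    (hd' : DifferentiableAt ℝ (deriv d) t) (hdt : d t ≠ 0) :
    HasDerivAt (barrierEnergy k d) (deriv (deriv d) t + k * (deriv d t / d t)) t :=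
  hd'.hasDerivAt.add ((hd.hasDerivAt.log hdt).const_mul k)

theorem integral_eq_sub_of_forall_ge_hasDerivAt_neg {E α : ℝ → ℝ} {c a b : ℝ}
    (hE : ∀ t ≥ c, HasDerivAt E (-α t) t) (hα : Continuous α) (ha : c ≤ a) (hab : a ≤ b) :
    ∫ τ in a..b, α τ = E a - E b := by
  have hFTC := intervalIntegral.integral_eq_sub_of_hasDerivAt (f := E) (f' := fun τ => -α τ)
    (fun x hx => hE x (ha.trans (uIcc_of_le hab ▸ hx).1)) (hα.neg.intervalIntegrable a b)
  rw [intervalIntegral.integral_neg] at hFTC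
  linarith

theorem sub_le_mul_sub_of_forall_ge_hasDerivAt_neg {E α : ℝ → ℝ} {c M a b : ℝ}
    (hE : ∀ t ≥ c, HasDerivAt E (-α t) t) (hα : ∀ t, -M ≤ α t) (ha : c ≤ a) (hab : a ≤ b) :
    E b - E a ≤ M * (b - a) := by
  refine (convex_Ici c).image_sub_le_mul_sub_of_deriv_le
    (fun t ht => (hE t ht).continuousAt.continuousWithinAt)
    (fun t ht => (hE t (interior_subset ht)).differentiableAt.differentiableWithinAt)
    (fun t ht => ?_) a ha b (ha.trans hab) hab
  rw [(hE t (interior_subset ht)).deriv]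
  linarith [hα t]

theorem tendsto_barrierEnergy_atBot {k M : ℝ} {d : ℝ → ℝ} (hk : 0 < k)
    (hd : Differentiable ℝ d) (hdpos : ∀ᶠ t in atTop, 0 < d t)
    (hdlim : Tendsto d atTop (𝓝 0))
    (hgrowth : ∀ s t, 0 ≤ s → s ≤ t →
      barrierEnergy k d t - barrierEnergy k d s ≤ M * (t - s)) :
    Tendsto (barrierEnergy k d) atTop atBot := by
  have hlog : Tendsto (fun t => k * Real.log (d t)) atTop atBot :=
    (Real.tendsto_log_nhdsGT_zero.comp
      (tendsto_nhdsWithin_iff.2 ⟨hdlim, hdpos⟩)).const_mul_atBot hk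
  have hincr : Tendsto (fun t => d t - d (t - 1)) atTop (𝓝 0) := by
    simpa [sub_eq_add_neg] using
      hdlim.sub (hdlim.comp (tendsto_atTop_add_const_right _ (-1) tendsto_id))
  rw [tendsto_atBot]
  intro C
  obtain ⟨T, hT⟩ := eventually_atTop.1 (hlog.eventually (eventually_le_atBot (C - max M 0 - 1)))
  filter_upwards [eventually_ge_atTop (T + 1), eventually_ge_atTop 1,
    hincr.eventually (eventually_le_nhds one_pos)] with t hTt ht1 hincr_t
  obtain ⟨ξ, ⟨hξl, hξr⟩, hξ⟩ := exists_deriv_eq_slope d (sub_one_lt t)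
    hd.continuous.continuousOn hd.differentiableOn
  rw [sub_sub_cancel, div_one] at hξ
  have hEξ := hgrowth ξ t (by linarith) hξr.le
  have hMξ : M * (t - ξ) ≤ max M 0 :=
    calc M * (t - ξ) ≤ max M 0 * (t - ξ) :=
          mul_le_mul_of_nonneg_right (le_max_left M 0) (by linarith)
      _ ≤ max M 0 * 1 := mul_le_mul_of_nonneg_left (by linarith) (le_max_right M 0)
      _ = max M 0 := mul_one _
  have hlogξ := hT ξ (by linarith)
  simp only [barrierEnergy] at hEξ ⊢
  linarith

theorem barrier_tendsto_zero_implies_integral_infinite_general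
    (k_o : ℝ) (hk : 0 < k_o) (α d : ℝ → ℝ)
    (hα_cont : Continuous α) (hα_bdd : ∃ M, ∀ t, |α t| ≤ M)
    (hd1 : Differentiable ℝ d) (hd2 : Differentiable ℝ (deriv d))
    (hdpos : ∀ t ≥ (0:ℝ), 0 < d t)
    (hode : ∀ t ≥ (0:ℝ),
      deriv (deriv d) t = -k_o * deriv d t / d t - α t)
    (hdlim : Tendsto d atTop (nhds 0)) :
    Tendsto (fun t => ∫ τ in (0:ℝ)..t, α τ) atTop atTop := by
  obtain ⟨M, hM⟩ := hα_bdd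
  set E := barrierEnergy k_o d
  have hE : ∀ t ≥ (0:ℝ), HasDerivAt E (-α t) t := fun t ht => by
    convert hasDerivAt_barrierEnergy (hd1 t) (hd2 t) (hdpos t ht).ne' using 1
    rw [hode t ht]
    ring
  have hE_atBot : Tendsto E atTop atBot :=
    tendsto_barrierEnergy_atBot hk hd1 (eventually_ge_atTop 0 |>.mono hdpos) hdlim
      fun s t hs hst => sub_le_mul_sub_of_forall_ge_hasDerivAt_neg hE
        (fun τ => (abs_le.1 (hM τ)).1) hs hst
  refine (tendsto_atTop_add_const_left _ (E 0) (tendsto_neg_atBot_atTop.comp hE_atBot)).congr' ?_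
  filter_upwards [eventually_ge_atTop 0] with t ht
  rw [integral_eq_sub_of_forall_ge_hasDerivAt_neg hE hα_cont le_rfl ht]
  rfl

/-- Forward implication of item 2 of Lemma 1: if the distance `d` governed by
the barrier ODE `d'' = -k_o * d'/d - α` (with `d > 0` on `[0, ∞)`) converges
to zero, then `∫₀ᵗ α → +∞`. -/
theorem barrier_tendsto_zero_implies_integral_infinite
    (k_o : ℝ) (hk : 0 < k_o) (α d : ℝ → ℝ)
    (hα_cont : Continuous α) (hα_bdd : ∃ M, ∀ t, |α t| ≤ M)
    (hd1 : Differentiable ℝ d) (hd2 : Differentiable ℝ (deriv d))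
    (hd0 : 0 < d 0) (hdpos : ∀ t ≥ (0:ℝ), 0 < d t)
    (hode : ∀ t ≥ (0:ℝ),
      deriv (deriv d) t = -k_o * deriv d t / d t - α t)
    (hdlim : Tendsto d atTop (nhds 0)) :
    Tendsto (fun t => ∫ τ in (0:ℝ)..t, α τ) atTop atTop :=
  barrier_tendsto_zero_implies_integral_infinite_general k_o hk α d hα_cont hα_bdd hd1 hd2 hdpos
    hode hdlim
end

section
/- Let k_o > 0, let α : ℝ → ℝ be continuous and bounded, and let d : ℝ → ℝ be twice differentiable with d(0) > 0 and d(t) > 0 for all t ≥ 0, satisfying d''(t) = −k_o·d'(t)/d(t) − α(t) for all t ≥ 0. If ∫₀ᵗ α(τ) dτ → +∞ as t → ∞, then d(t) → 0 as t → ∞. -/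
/-!
Along a solution, `E t = d' t + k_o log (d t) + ∫₀ᵗ α` is conserved, since `log d` is a primitive
of `d'/d`. Once `∫₀ᵗ α` is large, `d t ≥ δ` therefore forces `d' t ≤ -1`: above any level `δ > 0`
the positive function `d` decreases at unit speed, so it falls below `δ` in finite time and can
never cross `δ` upwards again.
-/

open Filter Set

theorem eq_of_hasDerivAt_zero_of_le {φ : ℝ → ℝ} {a : ℝ} (h : ∀ x ≥ a, HasDerivAt φ 0 x)
    {t : ℝ} (ht : a ≤ t) : φ t = φ a :=
  constant_of_has_deriv_right_zero (fun x hx => (h x hx.1).continuousAt.continuousWithinAt)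
    (fun x hx => (h x hx.1).hasDerivWithinAt) t ⟨ht, le_rfl⟩

theorem exists_le_of_deriv_le_neg_one {f : ℝ → ℝ} (hf : Differentiable ℝ f) {T m δ : ℝ}
    (hbdd : ∀ t ≥ T, m ≤ f t) (hder : ∀ t ≥ T, δ ≤ f t → deriv f t ≤ -1) :
    ∃ t ≥ T, f t ≤ δ := by
  by_contra! habove
  set s := f T - m + 1
  have hs : 0 ≤ s := by linarith [hbdd T le_rfl]
  have hdrop : f (T + s) - f T ≤ -1 * (T + s - T) :=
    (convex_Ici T).image_sub_le_mul_sub_of_deriv_le hf.continuous.continuousOn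
      hf.differentiableOn (fun x hx => hder x (interior_subset hx) (habove x (interior_subset hx)).le)
      T self_mem_Ici (T + s) (by simpa using hs) (by linarith)
  linarith [hbdd (T + s) (by linarith)]

theorem le_of_deriv_neg_of_eq {f : ℝ → ℝ} (hf : Differentiable ℝ f) {a b δ : ℝ} (hab : a ≤ b)
    (ha : f a ≤ δ) (hder : ∀ x ∈ Ico a b, f x = δ → deriv f x < 0) : f b ≤ δ :=
  image_le_of_deriv_right_lt_deriv_boundary (B := fun _ => δ) hf.continuous.continuousOn
    (fun x _ => (hf x).hasDerivAt.hasDerivWithinAt) ha (fun _ => hasDerivAt_const _ δ) hder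
    ⟨hab, le_rfl⟩

theorem eventually_le_of_deriv_le_neg_one {f : ℝ → ℝ} (hf : Differentiable ℝ f) {m δ : ℝ}
    (hbdd : ∀ᶠ t in atTop, m ≤ f t) (hder : ∀ᶠ t in atTop, δ ≤ f t → deriv f t ≤ -1) :
    ∀ᶠ t in atTop, f t ≤ δ := by
  obtain ⟨T, hT⟩ := (hbdd.and hder).exists_forall_of_atTop
  obtain ⟨t₀, ht₀T, ht₀⟩ :=
    exists_le_of_deriv_le_neg_one hf (fun t ht => (hT t ht).1) (fun t ht => (hT t ht).2)
  filter_upwards [eventually_ge_atTop t₀] with t ht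
  refine le_of_deriv_neg_of_eq hf ht ht₀ fun x hx hfx => ?_
  linarith [(hT x (ht₀T.trans hx.1)).2 hfx.ge]

theorem barrier_energy_eq (k : ℝ) {α d : ℝ → ℝ} (hα : Continuous α) (hd1 : Differentiable ℝ d)
    (hd2 : Differentiable ℝ (deriv d)) (hdpos : ∀ t ≥ (0:ℝ), 0 < d t)
    (hode : ∀ t ≥ (0:ℝ), deriv (deriv d) t = -k * deriv d t / d t - α t) {t : ℝ} (ht : 0 ≤ t) :
    deriv d t + k * Real.log (d t) + ∫ τ in (0:ℝ)..t, α τ = deriv d 0 + k * Real.log (d 0) := by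
  have hconst : ∀ x ≥ (0:ℝ),
      HasDerivAt (fun s => deriv d s + k * Real.log (d s) + ∫ τ in (0:ℝ)..s, α τ) 0 x := by
    intro x hx
    have hA : HasDerivAt (fun s => ∫ τ in (0:ℝ)..s, α τ) (α x) x :=
      intervalIntegral.integral_hasDerivAt_right (hα.intervalIntegrable _ _)
        (hα.stronglyMeasurableAtFilter _ _) hα.continuousAt
    have hlog := ((hd1 x).hasDerivAt.log (hdpos x hx).ne').const_mul k
    refine (((hd2 x).hasDerivAt.add hlog).add hA).congr_deriv ?_
    rw [hode x hx]
    ring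
  simpa using eq_of_hasDerivAt_zero_of_le hconst ht

theorem barrier_integral_infinite_implies_tendsto_zero_general
    (k_o : ℝ) (hk : 0 < k_o) (α d : ℝ → ℝ)
    (hα_cont : Continuous α)
    (hd1 : Differentiable ℝ d) (hd2 : Differentiable ℝ (deriv d))
    (hdpos : ∀ t ≥ (0:ℝ), 0 < d t)
    (hode : ∀ t ≥ (0:ℝ),
      deriv (deriv d) t = -k_o * deriv d t / d t - α t)
    (hint : Tendsto (fun t => ∫ τ in (0:ℝ)..t, α τ) atTop atTop) :
    Tendsto d atTop (nhds 0) := by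
  have hpos : ∀ᶠ t in atTop, 0 < d t := eventually_atTop.2 ⟨0, hdpos⟩
  refine tendsto_order.2 ⟨fun a ha => hpos.mono fun t ht => ha.trans ht, fun ε hε => ?_⟩
  set C := deriv d 0 + k_o * Real.log (d 0)
  have hder : ∀ᶠ t in atTop, ε / 2 ≤ d t → deriv d t ≤ -1 := by
    filter_upwards [eventually_ge_atTop 0,
      hint.eventually_ge_atTop (C - k_o * Real.log (ε / 2) + 1)] with t ht hA hdt
    have hlog := mul_le_mul_of_nonneg_left (Real.log_le_log (by positivity) hdt) hk.le
    linarith [barrier_energy_eq k_o hα_cont hd1 hd2 hdpos hode ht]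
  filter_upwards [eventually_le_of_deriv_le_neg_one hd1 (hpos.mono fun _ h => h.le) hder]
    with t ht
  linarith

/-- Backward implication of item 2 of Lemma 1: if the integral of `α`
diverges to `+∞`, then the distance `d` governed by the barrier ODE
`d'' = -k_o * d'/d - α` (with `d > 0` on `[0, ∞)`) converges to zero. -/
theorem barrier_integral_infinite_implies_tendsto_zero
    (k_o : ℝ) (hk : 0 < k_o) (α d : ℝ → ℝ)
    (hα_cont : Continuous α) (hα_bdd : ∃ M, ∀ t, |α t| ≤ M)
    (hd1 : Differentiable ℝ d) (hd2 : Differentiable ℝ (deriv d))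
    (hd0 : 0 < d 0) (hdpos : ∀ t ≥ (0:ℝ), 0 < d t)
    (hode : ∀ t ≥ (0:ℝ),
      deriv (deriv d) t = -k_o * deriv d t / d t - α t)
    (hint : Tendsto (fun t => ∫ τ in (0:ℝ)..t, α τ) atTop atTop) :
    Tendsto d atTop (nhds 0) :=
  barrier_integral_infinite_implies_tendsto_zero_general k_o hk α d hα_cont hd1 hd2 hdpos hode hint
end

section
/- Let k_o > 0, let α : ℝ → ℝ be continuous and bounded, and let d : ℝ → ℝ be twice differentiable with d(t) > 0 for all t ≥ 0, satisfying d''(t) = −k_o·d'(t)/d(t) − α(t) for all t ≥ 0. If d(t) → 0 as t → ∞, then the derivative d' is bounded on [0, ∞) and d'(t) → 0 as t → ∞. -/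
open Filter Set

/-- If `g a ≤ C` and `g` has negative derivative whenever it touches the level `C`
(on `[a, ∞)`), then `g ≤ C` on `[a, ∞)`. -/
lemma barrier_upper {g : ℝ → ℝ} (hg : Differentiable ℝ g) {a C : ℝ}
    (hga : g a ≤ C) (hC : ∀ t, a ≤ t → g t = C → deriv g t < 0) :
    ∀ t, a ≤ t → g t ≤ C := by
  intro t ht
  have H := image_le_of_deriv_right_lt_deriv_boundary (f := g) (f' := deriv g)
    (a := a) (b := t) (B := fun _ => C) (B' := fun _ => 0)
    hg.continuous.continuousOn
    (fun x _ => (hg x).hasDerivAt.hasDerivWithinAt)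
    hga (fun x => hasDerivAt_const x C)
    (fun x hx hgx => hC x hx.1 hgx)
  exact H (right_mem_Icc.2 ht)

/-- Core barrier estimate: if `g' = -k_o g / d - β` on `[T, ∞)` with `0 < d ≤ δ`,
`|β| ≤ M` and `M + 1 ≤ k_o ε / δ`, then eventually `g ≤ ε`. -/
lemma barrier_aux (k_o : ℝ) (hk : 0 < k_o) (g β d : ℝ → ℝ) (M : ℝ)
    (hβ : ∀ t, |β t| ≤ M) (hg : Differentiable ℝ g)
    (T δ : ℝ) (hδ : 0 < δ)
    (hd : ∀ t, T ≤ t → 0 < d t ∧ d t ≤ δ)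
    (hode : ∀ t, T ≤ t → deriv g t = -k_o * g t / d t - β t)
    (ε : ℝ) (hε : 0 < ε) (hεδ : M + 1 ≤ k_o * ε / δ) :
    ∀ᶠ t in atTop, g t ≤ ε := by
  -- Key: whenever `g t ≥ ε` (and `t ≥ T`), `deriv g t ≤ -1`.
  have key : ∀ t, T ≤ t → ε ≤ g t → deriv g t ≤ -1 := by
    intro t ht hgt
    obtain ⟨hd0, hdδ⟩ := hd t ht
    have h1 : k_o * ε / δ ≤ k_o * g t / d t :=
      div_le_div₀ (by nlinarith) (by nlinarith) hd0 hdδ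
    have h2 : -β t ≤ M := by have := abs_le.1 (hβ t); linarith [this.1]
    rw [hode t ht]
    have : -(k_o * g t / d t) ≤ -(k_o * ε / δ) := by linarith
    calc -k_o * g t / d t - β t = -(k_o * g t / d t) + -β t := by ring
      _ ≤ -(k_o * ε / δ) + M := by linarith
      _ ≤ -1 := by linarith
  -- Step 1: there is some `t₁ ≥ T` with `g t₁ ≤ ε`.
  have step1 : ∃ t₁, T ≤ t₁ ∧ g t₁ ≤ ε := by
    by_contra h
    push_neg at h
    -- then on `[T, ∞)` we have `deriv g ≤ -1`, so `g t + t` is antitone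
    have hmono : AntitoneOn (fun t => g t + t) (Ici T) := by
      apply antitoneOn_of_deriv_nonpos (convex_Ici T)
      · exact (hg.continuous.add continuous_id).continuousOn
      · intro x hx
        exact ((hg x).add differentiable_id.differentiableAt).differentiableWithinAt
      · intro x hx
        rw [interior_Ici] at hx
        have hx' : T ≤ x := le_of_lt hx
        have hder : deriv (fun t => g t + t) x = deriv g x + 1 :=
          ((hg x).hasDerivAt.add (hasDerivAt_id x)).deriv
        rw [hder]
        have := key x hx' (le_of_lt (h x hx'))
        linarith
    set t := max T (g T + T - ε) with ht_def
    have ht1 : T ≤ t := le_max_left _ _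
    have := hmono (self_mem_Ici) (mem_Ici.2 ht1) ht1
    have ht2 : g T + T - ε ≤ t := le_max_right _ _
    have := h t ht1
    simp only at *
    linarith
  obtain ⟨t₁, ht₁, hgt₁⟩ := step1
  -- Step 2: `g ≤ ε` stays true after `t₁`.
  have step2 : ∀ t, t₁ ≤ t → g t ≤ ε :=
    barrier_upper hg hgt₁ (fun t ht hgt => by
      have := key t (le_trans ht₁ ht) (le_of_eq hgt.symm)
      linarith)
  exact eventually_atTop.2 ⟨t₁, step2⟩

/-- First part of item 3 of Lemma 1: if the distance `d` governed by the
barrier ODE `d'' = -k_o * d'/d - α` (with `d > 0` on `[0, ∞)`) converges to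
zero, then its derivative `d'` is bounded on `[0, ∞)` and converges to zero. -/
theorem barrier_deriv_bounded_and_tendsto_zero
    (k_o : ℝ) (hk : 0 < k_o) (α d : ℝ → ℝ)
    (hα_cont : Continuous α) (hα_bdd : ∃ M, ∀ t, |α t| ≤ M)
    (hd1 : Differentiable ℝ d) (hd2 : Differentiable ℝ (deriv d))
    (hdpos : ∀ t ≥ (0:ℝ), 0 < d t)
    (hode : ∀ t ≥ (0:ℝ),
      deriv (deriv d) t = -k_o * deriv d t / d t - α t)
    (hdlim : Tendsto d atTop (nhds 0)) :
    (∃ M, ∀ t ≥ (0:ℝ), |deriv d t| ≤ M) ∧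
      Tendsto (deriv d) atTop (nhds 0) := by
  obtain ⟨M, hM⟩ := hα_bdd
  have hM0 : 0 ≤ M := le_trans (abs_nonneg _) (hM 0)
  set v := deriv d with hv
  -- a uniform bound `D` on `d` over `[0, ∞)`
  obtain ⟨T₀, hT₀⟩ := (Metric.tendsto_atTop.1 hdlim 1 one_pos)
  set T₀' := max T₀ 0 with hT₀'
  obtain ⟨x₀, _, hx₀'⟩ := (isCompact_Icc (a := (0:ℝ)) (b := T₀')).exists_isMaxOn
    (nonempty_Icc.2 (le_max_right _ _)) hd1.continuous.continuousOn
  have hx₀ : ∀ y ∈ Icc (0:ℝ) T₀', d y ≤ d x₀ := fun y hy => hx₀' hy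
  set D := max 1 (d x₀) with hD_def
  have hD1 : (1:ℝ) ≤ D := le_max_left _ _
  have hD0 : 0 < D := lt_of_lt_of_le one_pos hD1
  have hdD : ∀ t, 0 ≤ t → d t ≤ D := by
    intro t ht
    rcases le_or_gt t T₀' with h | h
    · exact le_trans (hx₀ t ⟨ht, h⟩) (le_max_right _ _)
    · have := hT₀ t (le_trans (le_max_left _ _) h.le)
      rw [Real.dist_eq, sub_zero] at this
      have := (abs_lt.1 this).2
      linarith
  -- derivative of `-v`
  have hvneg : Differentiable ℝ (fun t => -(v t)) := hd2.neg
  have hvneg_deriv : ∀ t, deriv (fun s => -(v s)) t = -(deriv v t) := by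
    intro t; exact deriv.neg
  -- boundedness
  have hbound : ∀ t ≥ (0:ℝ), |v t| ≤ max (|v 0|) (M * D / k_o) + 1 := by
    set C := max (|v 0|) (M * D / k_o) + 1 with hC_def
    have hCMD : M * D / k_o < C := lt_of_le_of_lt (le_max_right _ _) (lt_add_one _)
    have hC0 : 0 < C := lt_of_le_of_lt (by positivity) hCMD
    have hMC : M < k_o * C / D := by
      rw [lt_div_iff₀ hD0]
      have := (div_lt_iff₀ hk).1 hCMD
      linarith [this]
    have contact : ∀ t, 0 ≤ t → (C ≤ v t ∨ C ≤ -(v t)) → -k_o * C / d t + M < 0 := by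
      intro t ht _
      have hd0 := hdpos t ht
      have h1 : k_o * C / D ≤ k_o * C / d t :=
        div_le_div₀ (by positivity) le_rfl hd0 (hdD t ht)
      have : -(k_o * C / d t) ≤ -(k_o * C / D) := by linarith
      calc -k_o * C / d t + M = -(k_o * C / d t) + M := by ring
        _ ≤ -(k_o * C / D) + M := by linarith
        _ < 0 := by linarith
    have hup : ∀ t, (0:ℝ) ≤ t → v t ≤ C := by
      apply barrier_upper hd2
      · exact le_trans (le_abs_self _) (le_trans (le_max_left _ _) (le_of_lt (lt_add_one _)))
      · intro t ht hvt
        rw [hode t ht, hvt]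
        have h2 := (abs_le.1 (hM t)).1
        have := contact t ht (Or.inl hvt.ge)
        calc -k_o * C / d t - α t ≤ -k_o * C / d t + M := by linarith
          _ < 0 := this
    have hdown : ∀ t, (0:ℝ) ≤ t → -(v t) ≤ C := by
      apply barrier_upper hvneg
      · exact le_trans (neg_le_abs _) (le_trans (le_max_left _ _) (le_of_lt (lt_add_one _)))
      · intro t ht hvt
        rw [hvneg_deriv t, hode t ht]
        have h2 := (abs_le.1 (hM t)).2
        have hveq : v t = -C := by linarith
        have := contact t ht (Or.inr hvt.ge)
        calc -(-k_o * v t / d t - α t) = -k_o * C / d t + α t := by rw [hveq]; ring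
          _ ≤ -k_o * C / d t + M := by linarith
          _ < 0 := this
    intro t ht
    exact abs_le.2 ⟨by linarith [hdown t ht], hup t ht⟩
  refine ⟨⟨_, hbound⟩, ?_⟩
  -- convergence to zero
  rw [Metric.tendsto_atTop]
  intro ε hε
  set ε' := ε / 2 with hε'
  have hε'0 : 0 < ε' := by positivity
  set δ := min D (k_o * ε' / (M + 1)) with hδ_def
  have hδ0 : 0 < δ := lt_min hD0 (by positivity)
  have hεδ : M + 1 ≤ k_o * ε' / δ := by
    rw [le_div_iff₀ hδ0]
    have h1 : δ ≤ k_o * ε' / (M + 1) := min_le_right _ _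
    have hM1 : (0:ℝ) < M + 1 := by linarith
    calc (M + 1) * δ ≤ (M + 1) * (k_o * ε' / (M + 1)) := by gcongr
      _ = k_o * ε' := by field_simp
  obtain ⟨T₁, hT₁⟩ := Metric.tendsto_atTop.1 hdlim δ hδ0
  set T := max T₁ 0 with hT_def
  have hdδ : ∀ t, T ≤ t → 0 < d t ∧ d t ≤ δ := by
    intro t ht
    have ht0 : (0:ℝ) ≤ t := le_trans (le_max_right _ _) ht
    refine ⟨hdpos t ht0, ?_⟩
    have := hT₁ t (le_trans (le_max_left _ _) ht)
    rw [Real.dist_eq, sub_zero] at this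
    linarith [(abs_lt.1 this).2]
  have hup := barrier_aux k_o hk v α d M hM hd2 T δ hδ0 hdδ
    (fun t ht => hode t (le_trans (le_max_right _ _) ht)) ε' hε'0 hεδ
  have hdown := barrier_aux k_o hk (fun t => -(v t)) (fun t => -(α t)) d M
    (fun t => by rw [abs_neg]; exact hM t) hvneg T δ hδ0 hdδ
    (fun t ht => by
      rw [hvneg_deriv t, hode t (le_trans (le_max_right _ _) ht)]; ring)
    ε' hε'0 hεδ
  obtain ⟨N, hN⟩ := eventually_atTop.1 (hup.and hdown)
  refine ⟨N, fun n hn => ?_⟩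
  obtain ⟨h1, h2⟩ := hN n hn
  rw [Real.dist_eq, sub_zero]
  have h2' : -(v n) ≤ ε' := h2
  have habs : |v n| ≤ ε' := abs_le.2 ⟨by linarith, h1⟩
  have : ε' < ε := by rw [hε']; linarith
  exact lt_of_le_of_lt habs this
end

section
/- Let k_o > 0, let α : ℝ → ℝ be continuous and bounded, and let d : ℝ → ℝ be twice differentiable with d(0) > 0 and d(t) > 0 for all t ≥ 0, satisfying d''(t) = −k_o·d'(t)/d(t) − α(t) for all t ≥ 0. If d(t) → 0 as t → ∞, then the divergent flow φ(t) := d'(t)/d(t) is bounded on [0, ∞). -/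
open Filter Set

/-!
In terms of `φ = d'/d` the equation reads `φ' = (-k φ - α) / d - φ ^ 2`, with `|α| ≤ M`.
Above any level `B > M / k` the drift `(-k B - α) / d` is negative, so `φ` never crosses
`max (φ 0) (M / k + 1)` upwards. For a level `-c` with `k c > M` the drift `(k c - α) / d`
exceeds `c ^ 2` as soon as `d` is small, so once `d → 0` the level `-c` cannot be crossed
downwards. It is reached: were `φ < -c` forever, `d'' = -k φ - α > k c - M > 0` would make `d'`,
hence `φ`, positive. On the remaining compact interval `φ` is bounded by continuity.
-/

theorem image_le_of_deriv_neg_of_eq {f f' : ℝ → ℝ} {a B : ℝ}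
    (hf : ∀ t ≥ a, HasDerivAt f (f' t) t) (ha : f a ≤ B)
    (hB : ∀ t ≥ a, f t = B → f' t < 0) : ∀ t ≥ a, f t ≤ B := fun _ ht =>
  image_le_of_deriv_right_lt_deriv_boundary (B := fun _ => B) (B' := fun _ => 0)
    (fun x hx => (hf x hx.1).continuousAt.continuousWithinAt)
    (fun x hx => (hf x hx.1).hasDerivWithinAt) ha (fun x => hasDerivAt_const x B)
    (fun x hx => hB x hx.1) ⟨ht, le_rfl⟩

theorem le_image_of_deriv_pos_of_eq {f f' : ℝ → ℝ} {a B : ℝ}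
    (hf : ∀ t ≥ a, HasDerivAt f (f' t) t) (ha : B ≤ f a)
    (hB : ∀ t ≥ a, f t = B → 0 < f' t) : ∀ t ≥ a, B ≤ f t := by
  have := image_le_of_deriv_neg_of_eq (f := -f) (fun t ht => (hf t ht).neg) (neg_le_neg ha)
    fun t ht h => neg_neg_of_pos (hB t ht (neg_inj.1 h))
  exact fun t ht => neg_le_neg_iff.1 (this t ht)

theorem exists_pos_of_le_deriv {g g' : ℝ → ℝ} {T m : ℝ} (hm : 0 < m)
    (hg : ∀ t ≥ T, HasDerivAt g (g' t) t) (hg' : ∀ t ≥ T, m ≤ g' t) : ∃ t ≥ T, 0 < g t := by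
  set t := T + (|g T| + 1) / m
  have hTt : T ≤ t := le_add_of_nonneg_right (by positivity)
  have hslope : m * (t - T) ≤ g t - g T :=
    (convex_Ici T).mul_sub_le_image_sub_of_le_deriv
      (fun x hx => (hg x hx).continuousAt.continuousWithinAt)
      (fun x hx => (hg x (interior_subset hx)).differentiableAt.differentiableWithinAt)
      (fun x hx => (hg x (interior_subset hx)).deriv ▸ hg' x (interior_subset hx))
      T self_mem_Ici t hTt hTt
  have hrise : m * (t - T) = |g T| + 1 := by
    simp only [t, add_sub_cancel_left]; field_simp
  refine ⟨t, hTt, ?_⟩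
  linarith [neg_abs_le (g T)]

theorem hasDerivAt_logDeriv {𝕜 : Type*} [NontriviallyNormedField 𝕜] {f : 𝕜 → 𝕜} {x : 𝕜}
    (hf : DifferentiableAt 𝕜 f x) (hf' : DifferentiableAt 𝕜 (deriv f) x) (hx : f x ≠ 0) :
    HasDerivAt (logDeriv f) (deriv (deriv f) x / f x - logDeriv f x ^ 2) x := by
  refine (hf'.hasDerivAt.div hf.hasDerivAt hx).congr_deriv ?_
  rw [logDeriv_apply]
  field_simp

theorem exists_abs_le_of_continuousOn_Ici {φ : ℝ → ℝ} {a b lo hi : ℝ}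
    (hφ : ContinuousOn φ (Ici a)) (hlo : ∀ t ≥ b, lo ≤ φ t) (hhi : ∀ t ≥ b, φ t ≤ hi) :
    ∃ M, ∀ t ≥ a, |φ t| ≤ M := by
  obtain ⟨K, hK⟩ := isCompact_Icc.exists_bound_of_continuousOn (hφ.mono Icc_subset_Ici_self)
  refine ⟨max K (max |lo| |hi|), fun t ht => ?_⟩
  rcases le_total t b with htb | hbt
  · exact (hK t ⟨ht, htb⟩).trans (le_max_left _ _)
  · exact (abs_le_max_abs_abs (hlo t hbt) (hhi t hbt)).trans (le_max_right _ _)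

section Barrier

variable {k M a : ℝ} {α d φ : ℝ → ℝ}

theorem le_max_of_riccati (hk : 0 < k) (hα : ∀ t ≥ a, |α t| ≤ M) (hd : ∀ t ≥ a, 0 < d t)
    (hφ : ∀ t ≥ a, HasDerivAt φ ((-k * φ t - α t) / d t - φ t ^ 2) t) :
    ∀ t ≥ a, φ t ≤ max (φ a) (M / k + 1) := by
  refine image_le_of_deriv_neg_of_eq hφ (le_max_left _ _) fun t ht hφt => ?_
  have hkφ : M < k * φ t := by
    rw [hφt, ← div_lt_iff₀' hk]
    exact (lt_add_one _).trans_le (le_max_right _ _)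
  have hdrift : (-k * φ t - α t) / d t < 0 :=
    div_neg_of_neg_of_pos (by linarith [neg_abs_le (α t), hα t ht]) (hd t ht)
  nlinarith [sq_nonneg (φ t)]

theorem neg_le_of_riccati (hα : ∀ t ≥ a, |α t| ≤ M) (hd : ∀ t ≥ a, 0 < d t)
    (hφ : ∀ t ≥ a, HasDerivAt φ ((-k * φ t - α t) / d t - φ t ^ 2) t) {c : ℝ}
    (hsmall : ∀ t ≥ a, d t * c ^ 2 < k * c - M) (ha : -c ≤ φ a) :
    ∀ t ≥ a, -c ≤ φ t := by
  refine le_image_of_deriv_pos_of_eq hφ ha fun t ht hφt => ?_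
  rw [hφt, sub_pos, lt_div_iff₀ (hd t ht)]
  nlinarith [le_abs_self (α t), hα t ht, hsmall t ht]

theorem exists_neg_le_logDeriv (hk : 0 < k) (hα : ∀ t ≥ a, |α t| ≤ M) (hd : ∀ t ≥ a, 0 < d t)
    (hd' : ∀ t ≥ a, HasDerivAt (deriv d) (-k * logDeriv d t - α t) t) {c : ℝ}
    (hc : 0 ≤ c) (hcM : M < k * c) : ∃ t ≥ a, -c ≤ logDeriv d t := by
  by_contra! hlow
  obtain ⟨t, ht, hpos⟩ := exists_pos_of_le_deriv (sub_pos.2 hcM) hd' fun t ht => by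
    nlinarith [hlow t ht, le_abs_self (α t), hα t ht]
  have := hlow t ht
  rw [logDeriv_apply] at this
  linarith [div_pos hpos (hd t ht)]

end Barrier

theorem barrier_divergent_flow_bounded_general
    (k_o : ℝ) (hk : 0 < k_o) (α d : ℝ → ℝ)
    (hα_bdd : ∃ M, ∀ t, |α t| ≤ M)
    (hd1 : Differentiable ℝ d) (hd2 : Differentiable ℝ (deriv d))
    (hdpos : ∀ t ≥ (0:ℝ), 0 < d t)
    (hode : ∀ t ≥ (0:ℝ),
      deriv (deriv d) t = -k_o * deriv d t / d t - α t)
    (hdlim : Tendsto d atTop (nhds 0)) :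
    ∃ M, ∀ t ≥ (0:ℝ), |deriv d t / d t| ≤ M := by
  obtain ⟨M, hM⟩ := hα_bdd
  have hd'' : ∀ t ≥ (0:ℝ), HasDerivAt (deriv d) (-k_o * logDeriv d t - α t) t := fun t ht =>
    (hd2 t).hasDerivAt.congr_deriv (by rw [hode t ht, logDeriv_apply, mul_div_assoc])
  have hφ : ∀ t ≥ (0:ℝ), HasDerivAt (logDeriv d)
      ((-k_o * logDeriv d t - α t) / d t - logDeriv d t ^ 2) t := fun t ht => by
    rw [← (hd'' t ht).deriv]
    exact hasDerivAt_logDeriv (hd1 t) (hd2 t) (hdpos t ht).ne'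
  set c := (|M| + 1) / k_o
  have hcM : M < k_o * c := by rw [mul_div_cancel₀ _ hk.ne']; linarith [le_abs_self M]
  obtain ⟨T, hT⟩ : ∃ T, ∀ t ≥ T, d t * c ^ 2 < k_o * c - M := by
    refine eventually_atTop.1 ((hdlim.mul_const (c ^ 2)).eventually (gt_mem_nhds ?_))
    rwa [zero_mul, sub_pos]
  obtain ⟨t₀, ht₀, hφt₀⟩ := exists_neg_le_logDeriv (a := max T 0) hk (fun t _ => hM t)
    (fun t ht => hdpos t (le_of_max_le_right ht)) (fun t ht => hd'' t (le_of_max_le_right ht))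
    (div_nonneg (by positivity) hk.le) hcM
  have ht₀0 : 0 ≤ t₀ := le_of_max_le_right ht₀
  have hlow : ∀ t ≥ t₀, -c ≤ logDeriv d t :=
    neg_le_of_riccati (fun t _ => hM t) (fun t ht => hdpos t (ht₀0.trans ht))
      (fun t ht => hφ t (ht₀0.trans ht)) (fun t ht => hT t ((le_of_max_le_left ht₀).trans ht)) hφt₀
  simp_rw [← logDeriv_apply]
  exact exists_abs_le_of_continuousOn_Ici
    (fun t ht => (hφ t ht).continuousAt.continuousWithinAt) hlow
    (fun t ht => le_max_of_riccati hk (fun t _ => hM t) hdpos hφ t (ht₀0.trans ht))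

/-- Second part of item 3 of Lemma 1: if the distance `d` governed by the
barrier ODE `d'' = -k_o * d'/d - α` (with `d > 0` on `[0, ∞)`) converges to
zero, then the divergent flow `φ = d'/d` remains bounded on `[0, ∞)`. -/
theorem barrier_divergent_flow_bounded
    (k_o : ℝ) (hk : 0 < k_o) (α d : ℝ → ℝ)
    (hα_cont : Continuous α) (hα_bdd : ∃ M, ∀ t, |α t| ≤ M)
    (hd1 : Differentiable ℝ d) (hd2 : Differentiable ℝ (deriv d))
    (hd0 : 0 < d 0) (hdpos : ∀ t ≥ (0:ℝ), 0 < d t)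
    (hode : ∀ t ≥ (0:ℝ),
      deriv (deriv d) t = -k_o * deriv d t / d t - α t)
    (hdlim : Tendsto d atTop (nhds 0)) :
    ∃ M, ∀ t ≥ (0:ℝ), |deriv d t / d t| ≤ M :=
  barrier_divergent_flow_bounded_general k_o hk α d hα_bdd hd1 hd2 hdpos hode hdlim
end

section
/- Let k_o > 0, let α : ℝ → ℝ be continuous and bounded, and let d : ℝ → ℝ be twice differentiable with d(t) > 0 for all t ≥ 0, satisfying d''(t) = −k_o·d'(t)/d(t) − α(t) for all t ≥ 0. If d(t) → 0 as t → ∞ and α(t) converges to a constant α⁰ > 0 as t → ∞, then d'(t)/d(t) → −α⁰/k_o and d''(t) → 0 as t → ∞. -/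
/-!
Everything rests on a barrier principle: if `g' ≤ -c < 0` wherever `g ≥ 0`, then `g` is
eventually nonpositive. Since `d → 0`, the dissipation `-k d'/d` eventually dominates the bounded
`α` wherever `|d'| ≥ e`, which gives `d' → 0`. Where `d' ≥ λ d` the derivative of `d' - λ d` is at
most `-kλ - α - λ d' → -(kλ + α⁰)`, so `d'/d ≤ λ` eventually when `kλ + α⁰ > 0`, and symmetrically
`d'/d ≥ λ` eventually when `kλ + α⁰ < 0`. Hence `d'/d → -α⁰/k`, and `d'' = -k d'/d - α → 0`.
-/

open Filter Set Topology

lemma eventually_nonpos_of_hasDerivAt_barrier {g g' : ℝ → ℝ} {c : ℝ} (hc : 0 < c)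
    (hg : ∀ᶠ t in atTop, HasDerivAt g (g' t) t)
    (hbarrier : ∀ᶠ t in atTop, 0 ≤ g t → g' t ≤ -c) :
    ∀ᶠ t in atTop, g t ≤ 0 := by
  obtain ⟨t₀, ht₀⟩ := eventually_atTop.1 (hg.and hbarrier)
  have hcont : ContinuousOn g (Ici t₀) := fun t ht =>
    (ht₀ t ht).1.continuousAt.continuousWithinAt
  obtain ⟨a, ha, hga⟩ : ∃ a ≥ t₀, g a ≤ 0 := by
    by_contra! hpos
    -- while `g` stays positive it decreases at rate at least `c`, so it cannot stay positive
    have hinterior : ∀ x ∈ interior (Ici t₀), t₀ ≤ x := fun x hx => by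
      rw [interior_Ici] at hx
      exact le_of_lt hx
    have hdecay : ∀ t ≥ t₀, g t - g t₀ ≤ -c * (t - t₀) := fun t ht =>
      (convex_Ici t₀).image_sub_le_mul_sub_of_deriv_le hcont
        (fun x hx => (ht₀ x (hinterior x hx)).1.differentiableAt.differentiableWithinAt)
        (fun x hx => by
          rw [(ht₀ x (hinterior x hx)).1.deriv]
          exact (ht₀ x (hinterior x hx)).2 (hpos x (hinterior x hx)).le)
        t₀ (mem_Ici.2 le_rfl) t ht ht
    have hstep : 0 < g t₀ / c := div_pos (hpos t₀ le_rfl) hc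
    have hend := hdecay (t₀ + g t₀ / c + 1) (by linarith)
    have hpos_end := hpos (t₀ + g t₀ / c + 1) (by linarith)
    have hcancel : c * (g t₀ / c) = g t₀ := mul_div_cancel₀ _ hc.ne'
    linarith
  filter_upwards [eventually_ge_atTop a] with t ht
  refine image_le_of_deriv_right_lt_deriv_boundary (f' := g') (B := 0) (B' := 0)
    (hcont.mono (Icc_subset_Ici_self.trans (Ici_subset_Ici.2 ha))) (fun x hx => ?_) hga
    (fun x => hasDerivAt_const x 0) (fun x hx hgx => ?_) ⟨ht, le_rfl⟩
  · exact (ht₀ x (ha.trans hx.1)).1.hasDerivWithinAt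
  · exact ((ht₀ x (ha.trans hx.1)).2 hgx.ge).trans_lt (by simpa using hc)

namespace BarrierODE

variable {k : ℝ} {α d y : ℝ → ℝ}

lemma eventually_rate_le (hk : 0 < k) {m e : ℝ} (he : 0 < e)
    (hy : ∀ᶠ t in atTop, HasDerivAt y (-k * y t / d t - α t) t)
    (hd : ∀ᶠ t in atTop, 0 < d t) (hd0 : Tendsto d atTop (𝓝 0))
    (hα : ∀ᶠ t in atTop, m ≤ α t) :
    ∀ᶠ t in atTop, y t ≤ e := by
  have hsmall : ∀ᶠ t in atTop, (1 - m) * d t < k * e := by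
    refine (hd0.const_mul (1 - m)).eventually_lt_const ?_
    simpa using mul_pos hk he
  have hbarrier := eventually_nonpos_of_hasDerivAt_barrier one_pos
    (hy.mono fun t ht => ht.sub_const e) ?_
  · filter_upwards [hbarrier] with t ht
    linarith
  filter_upwards [hd, hα, hsmall] with t hdt hαt hsmall_t hyt
  -- the dissipative term `-k y / d` beats the bound on `α` once `d` is small
  have hflow : 1 - m ≤ k * y t / d t := by
    rw [le_div_iff₀ hdt]
    have := mul_le_mul_of_nonneg_left (show e ≤ y t by linarith) hk.le
    linarith
  rw [neg_mul, neg_div]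
  linarith

lemma tendsto_rate_zero (hk : 0 < k) {m M : ℝ}
    (hy : ∀ᶠ t in atTop, HasDerivAt y (-k * y t / d t - α t) t)
    (hd : ∀ᶠ t in atTop, 0 < d t) (hd0 : Tendsto d atTop (𝓝 0))
    (hm : ∀ᶠ t in atTop, m ≤ α t) (hM : ∀ᶠ t in atTop, α t ≤ M) :
    Tendsto y atTop (𝓝 0) := by
  -- `(-y, -α)` solves the same equation, so the upper bound also gives the lower one
  have hy_neg : ∀ᶠ t in atTop, HasDerivAt (fun t => -y t) (-k * (-y t) / d t - (-α t)) t :=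
    hy.mono fun t ht => ht.neg.congr_deriv (by ring)
  refine tendsto_order.2 ⟨fun a ha => ?_, fun b hb => ?_⟩
  · obtain ⟨e, he, hea⟩ := exists_between (neg_pos.2 ha)
    filter_upwards [eventually_rate_le hk he hy_neg hd hd0 (hM.mono fun t ht => neg_le_neg ht)]
      with t ht
    linarith
  · obtain ⟨e, he, heb⟩ := exists_between hb
    filter_upwards [eventually_rate_le hk he hy hd hd0 hm] with t ht
    linarith

variable {α₀ l : ℝ}

lemma eventually_flow_le (hk : 0 ≤ k) (hl : 0 < k * l + α₀)
    (hdy : ∀ᶠ t in atTop, HasDerivAt d (y t) t)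
    (hy : ∀ᶠ t in atTop, HasDerivAt y (-k * y t / d t - α t) t)
    (hd : ∀ᶠ t in atTop, 0 < d t) (hy0 : Tendsto y atTop (𝓝 0))
    (hα : Tendsto α atTop (𝓝 α₀)) :
    ∀ᶠ t in atTop, y t / d t ≤ l := by
  have hrest : ∀ᶠ t in atTop, -(k * l) - α t - l * y t < -((k * l + α₀) / 2) := by
    refine ((tendsto_const_nhds.sub hα).sub (hy0.const_mul l)).eventually_lt_const ?_
    rw [mul_zero]
    linarith
  have hbarrier := eventually_nonpos_of_hasDerivAt_barrier (g := fun t => y t - l * d t)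
    (half_pos hl)
    (hdy.and hy |>.mono fun t ht => ht.2.sub (ht.1.const_mul l)) ?_
  · filter_upwards [hbarrier, hd] with t ht hdt
    rw [div_le_iff₀ hdt]
    linarith
  filter_upwards [hd, hrest] with t hdt hrest_t hgt
  have hflow : k * l ≤ k * (y t / d t) :=
    mul_le_mul_of_nonneg_left ((le_div_iff₀ hdt).2 (by linarith)) hk
  rw [mul_div_assoc]
  linarith

lemma eventually_le_flow (hk : 0 ≤ k) (hl : k * l + α₀ < 0)
    (hdy : ∀ᶠ t in atTop, HasDerivAt d (y t) t)
    (hy : ∀ᶠ t in atTop, HasDerivAt y (-k * y t / d t - α t) t)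
    (hd : ∀ᶠ t in atTop, 0 < d t) (hy0 : Tendsto y atTop (𝓝 0))
    (hα : Tendsto α atTop (𝓝 α₀)) :
    ∀ᶠ t in atTop, l ≤ y t / d t := by
  have hrest : ∀ᶠ t in atTop, k * l + α t + l * y t < (k * l + α₀) / 2 := by
    refine ((tendsto_const_nhds.add hα).add (hy0.const_mul l)).eventually_lt_const ?_
    rw [mul_zero]
    linarith
  have hbarrier := eventually_nonpos_of_hasDerivAt_barrier (g := fun t => l * d t - y t)
    (c := -((k * l + α₀) / 2)) (by linarith)
    (hdy.and hy |>.mono fun t ht => (ht.1.const_mul l).sub ht.2) ?_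
  · filter_upwards [hbarrier, hd] with t ht hdt
    rw [le_div_iff₀ hdt]
    linarith
  filter_upwards [hd, hrest] with t hdt hrest_t hgt
  have hflow : k * (y t / d t) ≤ k * l :=
    mul_le_mul_of_nonneg_left ((div_le_iff₀ hdt).2 (by linarith)) hk
  rw [mul_div_assoc]
  linarith

lemma tendsto_flow (hk : 0 < k) (hdy : ∀ᶠ t in atTop, HasDerivAt d (y t) t)
    (hy : ∀ᶠ t in atTop, HasDerivAt y (-k * y t / d t - α t) t)
    (hd : ∀ᶠ t in atTop, 0 < d t) (hd0 : Tendsto d atTop (𝓝 0))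
    (hα : Tendsto α atTop (𝓝 α₀)) :
    Tendsto (fun t => y t / d t) atTop (𝓝 (-(α₀ / k))) := by
  have hy0 : Tendsto y atTop (𝓝 0) := tendsto_rate_zero hk hy hd hd0
    (hα.eventually_const_le (sub_one_lt α₀)) (hα.eventually_le_const (lt_add_one α₀))
  refine tendsto_order.2 ⟨fun a ha => ?_, fun b hb => ?_⟩
  · obtain ⟨l, hal, hl⟩ := exists_between ha
    have hl' : k * l + α₀ < 0 := by
      rw [lt_neg, div_lt_iff₀ hk] at hl
      linarith
    filter_upwards [eventually_le_flow hk.le hl' hdy hy hd hy0 hα] with t ht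
    exact hal.trans_le ht
  · obtain ⟨l, hl, hlb⟩ := exists_between hb
    have hl' : 0 < k * l + α₀ := by
      rw [neg_lt, lt_div_iff₀ hk] at hl
      linarith
    filter_upwards [eventually_flow_le hk.le hl' hdy hy hd hy0 hα] with t ht
    exact ht.trans_lt hlb

end BarrierODE

theorem barrier_divergent_flow_limit_general
    (k_o : ℝ) (hk : 0 < k_o) (α d : ℝ → ℝ)
    (hd1 : Differentiable ℝ d) (hd2 : Differentiable ℝ (deriv d))
    (hdpos : ∀ t ≥ (0:ℝ), 0 < d t)
    (hode : ∀ t ≥ (0:ℝ),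
      deriv (deriv d) t = -k_o * deriv d t / d t - α t)
    (hdlim : Tendsto d atTop (nhds 0))
    (α0 : ℝ) (hαlim : Tendsto α atTop (nhds α0)) :
    Tendsto (fun t => deriv d t / d t) atTop (nhds (-(α0 / k_o))) ∧
      Tendsto (deriv (deriv d)) atTop (nhds 0) := by
  have hd : ∀ᶠ t in atTop, 0 < d t := eventually_atTop.2 ⟨0, hdpos⟩
  have hode' : ∀ᶠ t in atTop, deriv (deriv d) t = -k_o * deriv d t / d t - α t :=
    eventually_atTop.2 ⟨0, hode⟩
  have hy : ∀ᶠ t in atTop, HasDerivAt (deriv d) (-k_o * deriv d t / d t - α t) t :=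
    hode'.mono fun t ht => ht ▸ (hd2 t).hasDerivAt
  have hflow := BarrierODE.tendsto_flow hk (.of_forall fun t => (hd1 t).hasDerivAt) hy hd
    hdlim hαlim
  refine ⟨hflow, ?_⟩
  have hlim : -k_o * -(α0 / k_o) - α0 = 0 := by
    field_simp
    ring
  refine (hlim ▸ (hflow.const_mul (-k_o)).sub hαlim).congr' ?_
  filter_upwards [hode'] with t ht
  rw [ht, mul_div_assoc]

/-- Last part of item 3 of Lemma 1: if the distance `d` governed by the
barrier ODE `d'' = -k_o * d'/d - α` (with `d > 0` on `[0, ∞)`) converges to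
zero and `α` converges to a positive constant `α⁰`, then the divergent flow
`d'/d → -α⁰/k_o` and `d'' → 0`. -/
theorem barrier_divergent_flow_limit
    (k_o : ℝ) (hk : 0 < k_o) (α d : ℝ → ℝ)
    (hα_cont : Continuous α) (hα_bdd : ∃ M, ∀ t, |α t| ≤ M)
    (hd1 : Differentiable ℝ d) (hd2 : Differentiable ℝ (deriv d))
    (hdpos : ∀ t ≥ (0:ℝ), 0 < d t)
    (hode : ∀ t ≥ (0:ℝ),
      deriv (deriv d) t = -k_o * deriv d t / d t - α t)
    (hdlim : Tendsto d atTop (nhds 0))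
    (α0 : ℝ) (hα0 : 0 < α0) (hαlim : Tendsto α atTop (nhds α0)) :
    Tendsto (fun t => deriv d t / d t) atTop (nhds (-(α0 / k_o))) ∧
      Tendsto (deriv (deriv d)) atTop (nhds 0) :=
  barrier_divergent_flow_limit_general k_o hk α d hd1 hd2 hdpos hode hdlim α0 hαlim
end

section
/- Work in E = EuclideanSpace ℝ (Fin 3). Fix a safety distance r > 0, a constant c > r, positive gains k_p, k_v, k_o, constants 0 < ε < η, and continuously differentiable functions h_p, h_v : ℝ → ℝ with ε ≤ h_p(s) ≤ η and ε ≤ h_v(s) ≤ η for all s. Let Ω* : ℝ → (E →ₗ[ℝ] E) be continuous and pointwise skew-adjoint, and let e* : ℝ → E be differentiable with ‖e*(t)‖ = c and (e*)'(t) = Ω*(t)(e*(t)) for all t. Let ẽ, ν̃ : ℝ → E be differentiable; set e(t) = ẽ(t) + e*(t), d(t) = ‖e(t)‖ − r, g(t) = e(t)/‖e(t)‖, φ(t) = ⟪g(t), ν̃(t)⟫/d(t), and L(t) = (k_p/2)·∫₀^{‖ẽ(t)‖²} h_p(s) ds + (1/2)·‖ν̃(t)‖². Suppose that at some t ≥ 0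 one has d(t) > 0 and the closed-loop equations ẽ'(t) = Ω*(t)ẽ(t) + ν̃(t) and ν̃'(t) = −Ω*(t)ν̃(t) − k_p·h_p(‖ẽ(t)‖²)·ẽ(t) − k_v·h_v(‖ν̃(t)‖)·ν̃(t) − k_o·φ(t)·g(t) hold at t. Then L is differentiable at t with L'(t) = −k_v·h_v(‖ν̃(t)‖)·‖ν̃(t)‖² − k_o·⟪g(t), ν̃(t)⟫²/d(t) ≤ 0. -/
open Filter
open scoped RealInnerProductSpace

local notation "E" => EuclideanSpace ℝ (Fin 3)

/-!
Along `ẽ' = Ω ẽ + ν̃` and `ν̃' = -Ω ν̃ - k_p h_p(‖ẽ‖²) ẽ - w`, the skew-adjoint terms are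
orthogonal to the vector they act on, and the proportional force `-k_p h_p(‖ẽ‖²) ẽ` is exactly
the gradient of the potential `(k_p/2) ∫₀^{‖ẽ‖²} h_p`, so its power cancels against the
cross term `⟪ẽ, ν̃⟫` of that potential. Hence the energy `L` dissipates at rate `⟪ν̃, w⟫`, and for
the damping and barrier forces `w = k_v h_v ν̃ + k_o φ g` this power is a sum of two squares with
nonnegative weights.
-/

section

variable {F : Type*} [NormedAddCommGroup F] [InnerProductSpace ℝ F]

theorem inner_apply_self_eq_zero_of_skew {A : F → F} (hA : ∀ x y, ⟪A x, y⟫ = -⟪x, A y⟫)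
    (x : F) : ⟪A x, x⟫ = 0 := by
  have h := hA x x
  rw [real_inner_comm (A x) x] at h
  linarith

theorem HasDerivAt.intervalIntegral_upper {h : ℝ → ℝ} (hh : Continuous h) (a : ℝ)
    {u : ℝ → ℝ} {u' t : ℝ} (hu : HasDerivAt u u' t) :
    HasDerivAt (fun τ => ∫ s in a..u τ, h s) (h (u t) * u') t :=
  (hh.integral_hasStrictDerivAt a (u t)).hasDerivAt.comp t hu

theorem hasDerivAt_energy_of_skew_closedLoop {k : ℝ} {h : ℝ → ℝ} (hh : Continuous h)
    {A : F → F} (hA : ∀ x y, ⟪A x, y⟫ = -⟪x, A y⟫) {x v : ℝ → F} {w : F} {t : ℝ}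
    (hx : HasDerivAt x (A (x t) + v t) t)
    (hv : HasDerivAt v (-A (v t) - (k * h (‖x t‖ ^ 2)) • x t - w) t) :
    HasDerivAt (fun τ => (k / 2) * (∫ s in (0:ℝ)..(‖x τ‖ ^ 2), h s) + (1 / 2) * ‖v τ‖ ^ 2)
      (-⟪v t, w⟫) t := by
  have hpot := (hx.norm_sq.intervalIntegral_upper hh 0).const_mul (k / 2)
  refine (hpot.add (hv.norm_sq.const_mul (1 / 2))).congr_deriv ?_
  simp only [inner_add_right, inner_sub_right, inner_neg_right, real_inner_smul_right,
    real_inner_comm (A _), inner_apply_self_eq_zero_of_skew hA,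
    real_inner_comm (x t) (v t)]
  ring

end

theorem lyapunov_dissipation_general
    (k_p k_v k_o ε η : ℝ)
    (hkv : 0 < k_v) (hko : 0 < k_o)
    (hε : 0 < ε)
    (h_p h_v : ℝ → ℝ) (hhp : ContDiff ℝ 1 h_p)
    (hhv_bd : ∀ s, ε ≤ h_v s ∧ h_v s ≤ η)
    (Ω : ℝ → E →L[ℝ] E)
    (hΩskew : ∀ t (x y : E), ⟪Ω t x, y⟫ = -⟪x, Ω t y⟫)
    (etil νtil : ℝ → E)
    (hetil : Differentiable ℝ etil) (hνtil : Differentiable ℝ νtil)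
    (d : ℝ → ℝ)
    (g : ℝ → E)
    (φ : ℝ → ℝ) (hφ : ∀ t, φ t = ⟪g t, νtil t⟫ / d t)
    (L : ℝ → ℝ)
    (hL : ∀ t, L t = (k_p / 2) * (∫ s in (0:ℝ)..(‖etil t‖ ^ 2), h_p s)
      + (1 / 2) * ‖νtil t‖ ^ 2)
    (t : ℝ) (hdt : 0 < d t)
    (heq1 : deriv etil t = Ω t (etil t) + νtil t)
    (heq2 : deriv νtil t = -(Ω t (νtil t)) - (k_p * h_p (‖etil t‖ ^ 2)) • etil t
      - (k_v * h_v ‖νtil t‖) • νtil t - (k_o * φ t) • g t) :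
    HasDerivAt L
      (-(k_v * h_v ‖νtil t‖) * ‖νtil t‖ ^ 2 - k_o * ⟪g t, νtil t⟫ ^ 2 / d t) t ∧
    -(k_v * h_v ‖νtil t‖) * ‖νtil t‖ ^ 2 - k_o * ⟪g t, νtil t⟫ ^ 2 / d t ≤ 0 := by
  rw [sub_sub] at heq2
  have hdiss := hasDerivAt_energy_of_skew_closedLoop hhp.continuous (hΩskew t)
    (heq1 ▸ (hetil t).hasDerivAt) (heq2 ▸ (hνtil t).hasDerivAt)
  have hpower : -⟪νtil t, (k_v * h_v ‖νtil t‖) • νtil t + (k_o * φ t) • g t⟫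
      = -(k_v * h_v ‖νtil t‖) * ‖νtil t‖ ^ 2 - k_o * ⟪g t, νtil t⟫ ^ 2 / d t := by
    rw [inner_add_right, real_inner_smul_right, real_inner_smul_right,
      real_inner_self_eq_norm_sq, real_inner_comm, hφ t]
    ring
  have hhv_nonneg : 0 ≤ h_v ‖νtil t‖ := hε.le.trans (hhv_bd _).1
  refine ⟨funext hL ▸ hpower ▸ hdiss, ?_⟩
  have hdamp : 0 ≤ k_v * h_v ‖νtil t‖ * ‖νtil t‖ ^ 2 := by positivity
  have hbarrier : 0 ≤ k_o * ⟪g t, νtil t⟫ ^ 2 / d t := by positivity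
  linarith

/-- Lyapunov dissipation computation (equation (10)) in the proof of
Lemma 2: along the closed-loop dynamics of the two-agent system, the
Lyapunov function `L = (k_p/2)∫₀^{‖ẽ‖²} h_p + (1/2)‖ν̃‖²` has derivative
`L' = -k_v h_v(‖ν̃‖) ‖ν̃‖² - k_o ⟪g, ν̃⟫²/d ≤ 0`. -/
theorem lyapunov_dissipation
    (r c k_p k_v k_o ε η : ℝ)
    (hr : 0 < r) (hc : r < c) (hkp : 0 < k_p) (hkv : 0 < k_v) (hko : 0 < k_o)
    (hε : 0 < ε) (hεη : ε < η)
    (h_p h_v : ℝ → ℝ) (hhp : ContDiff ℝ 1 h_p) (hhv : ContDiff ℝ 1 h_v)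
    (hhp_bd : ∀ s, ε ≤ h_p s ∧ h_p s ≤ η) (hhv_bd : ∀ s, ε ≤ h_v s ∧ h_v s ≤ η)
    (Ω : ℝ → E →L[ℝ] E) (hΩc : Continuous Ω)
    (hΩskew : ∀ t (x y : E), ⟪Ω t x, y⟫ = -⟪x, Ω t y⟫)
    (estar : ℝ → E) (hestar : Differentiable ℝ estar)
    (hestar_norm : ∀ t, ‖estar t‖ = c)
    (hestar_dyn : ∀ t, deriv estar t = Ω t (estar t))
    (etil νtil : ℝ → E)
    (hetil : Differentiable ℝ etil) (hνtil : Differentiable ℝ νtil)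
    (e : ℝ → E) (he : ∀ t, e t = etil t + estar t)
    (d : ℝ → ℝ) (hd : ∀ t, d t = ‖e t‖ - r)
    (g : ℝ → E) (hg : ∀ t, g t = ‖e t‖⁻¹ • e t)
    (φ : ℝ → ℝ) (hφ : ∀ t, φ t = ⟪g t, νtil t⟫ / d t)
    (L : ℝ → ℝ)
    (hL : ∀ t, L t = (k_p / 2) * (∫ s in (0:ℝ)..(‖etil t‖ ^ 2), h_p s)
      + (1 / 2) * ‖νtil t‖ ^ 2)
    (t : ℝ) (ht : 0 ≤ t) (hdt : 0 < d t)
    (heq1 : deriv etil t = Ω t (etil t) + νtil t)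
    (heq2 : deriv νtil t = -(Ω t (νtil t)) - (k_p * h_p (‖etil t‖ ^ 2)) • etil t
      - (k_v * h_v ‖νtil t‖) • νtil t - (k_o * φ t) • g t) :
    HasDerivAt L
      (-(k_v * h_v ‖νtil t‖) * ‖νtil t‖ ^ 2 - k_o * ⟪g t, νtil t⟫ ^ 2 / d t) t ∧
    -(k_v * h_v ‖νtil t‖) * ‖νtil t‖ ^ 2 - k_o * ⟪g t, νtil t⟫ ^ 2 / d t ≤ 0 :=
  lyapunov_dissipation_general k_p k_v k_o ε η hkv hko hε h_p h_v hhp hhv_bd Ω hΩskew etil νtil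
    hetil hνtil d g φ hφ L hL t hdt heq1 heq2
end

section
/- Let Ω be a real 3×3 matrix with Ωᵀ = −Ω, let g ∈ ℝ³ with Euclidean norm ‖g‖ = 1 and Ω·g ≠ 0, and let r, c > 0. Then there exists ε₀ > 0 such that for every ε with 0 < ε < ε₀, writing R(ε) = exp(ε·Ω) (matrix exponential), one has ⟪g, R(ε)·g⟫ < 1 and ‖r·(R(ε)·g) + c·g‖ < r + c (Euclidean inner product and norm on ℝ³). -/
/-!
Since `Ω` is skew-symmetric, `R(ε) = exp(εΩ)` is orthogonal, so `R(ε) g` is a unit vector.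
Its derivative at `ε = 0` is `Ω g ≠ 0`, hence `R(ε) g ≠ g` for all small `ε > 0`. For two distinct
unit vectors both the Cauchy–Schwarz inequality and the triangle inequality are strict.
-/

open Matrix NormedSpace Filter Topology
open scoped RealInnerProductSpace

namespace Matrix

variable {n : Type*} [Fintype n] [DecidableEq n]

theorem exp_mem_orthogonalGroup_of_transpose_eq_neg {A : Matrix n n ℝ} (hA : Aᵀ = -A) :
    exp A ∈ orthogonalGroup n ℝ := by
  rw [mem_orthogonalGroup_iff', ← exp_transpose, hA,
    ← exp_add_of_commute _ _ (Commute.refl A).neg_left, neg_add_cancel, exp_zero]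

theorem norm_toLp_mulVec_of_mem_orthogonalGroup {U : Matrix n n ℝ} (hU : U ∈ orthogonalGroup n ℝ)
    (x : EuclideanSpace ℝ n) : ‖WithLp.toLp 2 (U *ᵥ WithLp.ofLp x)‖ = ‖x‖ := by
  have hU' : toEuclideanCLM (𝕜 := ℝ) U ∈ unitary (EuclideanSpace ℝ n →L[ℝ] EuclideanSpace ℝ n) :=
    Unitary.map_mem (toEuclideanCLM (n := n) (𝕜 := ℝ)) hU
  exact ContinuousLinearMap.norm_map_of_mem_unitary hU' x

-- `exp` does not depend on the norm; any normed-algebra structure on matrices serves for calculus.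
open scoped Norms.Operator in
theorem hasDerivAt_exp_smul_mulVec (A : Matrix n n ℝ) (v : n → ℝ) :
    HasDerivAt (fun t : ℝ => exp (t • A) *ᵥ v) (A *ᵥ v) 0 := by
  have hexp := hasDerivAt_exp_smul_const (𝕂 := ℝ) A 0
  rw [zero_smul, exp_zero, one_mul] at hexp
  let L : Matrix n n ℝ →L[ℝ] (n → ℝ) :=
    ((LinearMap.applyₗ v).comp (toLin' : Matrix n n ℝ ≃ₗ[ℝ] _).toLinearMap).toContinuousLinearMap
  exact L.hasFDerivAt.comp_hasDerivAt 0 hexp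

theorem eventually_exp_smul_mulVec_ne {A : Matrix n n ℝ} {v : n → ℝ} (h : A *ᵥ v ≠ 0) :
    ∀ᶠ t in 𝓝[≠] (0 : ℝ), exp (t • A) *ᵥ v ≠ v := by
  simpa using (hasDerivAt_exp_smul_mulVec A v).eventually_ne h

end Matrix

theorem norm_smul_add_smul_lt_of_ne {E : Type*} [NormedAddCommGroup E] [NormedSpace ℝ E]
    [StrictConvexSpace ℝ E] {x y : E} (hxy : x ≠ y) (hx : ‖x‖ = 1) (hy : ‖y‖ = 1) {r c : ℝ}
    (hr : 0 < r) (hc : 0 < c) : ‖r • x + c • y‖ < r + c := by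
  have hray : ¬SameRay ℝ (r • x) (c • y) := fun h ↦ by
    have := (h.pos_smul_left (inv_pos.2 hr)).pos_smul_right (inv_pos.2 hc)
    rw [inv_smul_smul₀ hr.ne', inv_smul_smul₀ hc.ne'] at this
    exact hxy (this.eq_of_norm_eq (hx.trans hy.symm))
  calc ‖r • x + c • y‖ < ‖r • x‖ + ‖c • y‖ := norm_add_lt_of_not_sameRay hray
    _ = r + c := by
      rw [norm_smul_of_nonneg hr.le, norm_smul_of_nonneg hc.le, hx, hy, mul_one, mul_one]

/-- Perturbation argument showing instability of the undesired set point in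
Lemma 2: for a skew-symmetric `Ω` with `Ω g ≠ 0`, `‖g‖ = 1` and `r, c > 0`,
small rotations `R(ε) = exp(ε Ω)` satisfy `⟪g, R(ε) g⟫ < 1` and
`‖r R(ε) g + c g‖ < r + c`. -/
theorem instability_perturbation
    (Ω : Matrix (Fin 3) (Fin 3) ℝ) (hΩ : Ωᵀ = -Ω)
    (g : EuclideanSpace ℝ (Fin 3)) (hg : ‖g‖ = 1)
    (hΩg : Ω.mulVec (WithLp.equiv 2 (Fin 3 → ℝ) g) ≠ 0)
    (r c : ℝ) (hr : 0 < r) (hc : 0 < c) :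
    ∃ ε₀ > (0:ℝ), ∀ ε, 0 < ε → ε < ε₀ →
      ⟪g, (WithLp.equiv 2 (Fin 3 → ℝ)).symm
          ((NormedSpace.exp (ε • Ω)).mulVec (WithLp.equiv 2 (Fin 3 → ℝ) g))⟫ < 1 ∧
      ‖r • ((WithLp.equiv 2 (Fin 3 → ℝ)).symm
          ((NormedSpace.exp (ε • Ω)).mulVec (WithLp.equiv 2 (Fin 3 → ℝ) g)))
        + c • g‖ < r + c := by
  set R : ℝ → EuclideanSpace ℝ (Fin 3) := fun ε ↦ WithLp.toLp 2 (exp (ε • Ω) *ᵥ WithLp.ofLp g)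
  have hR_norm (ε : ℝ) : ‖R ε‖ = 1 := by
    have hskew : (ε • Ω)ᵀ = -(ε • Ω) := by rw [transpose_smul, hΩ, smul_neg]
    rw [← hg]
    exact norm_toLp_mulVec_of_mem_orthogonalGroup
      (exp_mem_orthogonalGroup_of_transpose_eq_neg hskew) g
  have hR_ne : ∀ᶠ ε in 𝓝[>] 0, R ε ≠ g :=
    ((eventually_exp_smul_mulVec_ne hΩg).filter_mono (nhdsWithin_mono _ fun _ ↦ ne_of_gt)).mono
      fun _ h hR ↦ h (congrArg WithLp.ofLp hR)
  obtain ⟨ε₀, hε₀, hR_ne_Ioo⟩ := (nhdsGT_basis 0).eventually_iff.1 hR_ne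
  refine ⟨ε₀, hε₀, fun ε hε hεε₀ ↦ ?_⟩
  have hne := hR_ne_Ioo ⟨hε, hεε₀⟩
  exact ⟨(inner_lt_one_iff_real_of_norm_eq_one hg (hR_norm ε)).2 (Ne.symm hne),
    norm_smul_add_smul_lt_of_ne hne (hR_norm ε) hg hr hc⟩
end

section
/- Work in E = EuclideanSpace ℝ (Fin 3). Fix a safety distance r > 0, a constant c > r, positive gains k_p, k_v, k_o, constants 0 < ε < η, and continuously differentiable functions h_p, h_v : ℝ → ℝ with ε ≤ h_p(s) ≤ η and ε ≤ h_v(s) ≤ η for all s. Let Ω* : ℝ → (E →ₗ[ℝ] E) be continuous, bounded in operator norm, and pointwise skew-adjoint, let e* : ℝ → E be differentiable with ‖e*(t)‖ = c and (e*)'(t) = Ω*(t)(e*(t)) for all t, and let w : ℝ → E be continuous and bounded. Let ẽ, ν̃ : ℝ → E be differentiable; set e(t) = ẽ(t) + e*(t), d(t) = ‖e(t)‖ − r, g(t) = e(t)/‖e(t)‖, φ(t) = ⟪g(t), ν̃(t)⟫/d(t), and suppose the perturbed closed-loop equations ẽ'(t) = Ω*(t)ẽ(t) + ν̃(t) and ν̃'(t)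 = −Ω*(t)ν̃(t) − k_p·h_p(‖ẽ(t)‖²)·ẽ(t) − k_v·h_v(‖ν̃(t)‖)·ν̃(t) − k_o·φ(t)·g(t) − w(t) hold at every t ≥ 0 at which d(t) > 0, and that ẽ and ν̃ are bounded on [0, ∞). If d(0) > 0, then d(t) > 0 for all t ≥ 0 and the divergent flow φ is bounded on [0, ∞). -/
/-!
Along the closed loop `d' = s` with `s = ⟪g, ν̃⟫`, because the rotation `Ω*` does not change `‖e‖`,
and `s' = -k_o φ + R` with `|R| ≤ C`, because `ẽ`, `ν̃`, `Ω*`, the gains and `w` are. The rest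
happens in the scalar system `(d, s)`. While `d > 0` the product `d · exp ((s + C t) / k_o)` is
nondecreasing, so `d` cannot reach `0` in finite time. On an excursion where `φ > C / k_o`, `d`
grows and `s` decreases, so `φ = s / d` stays below its entry value. On an excursion where
`φ < -2 C / k_o`, `s` grows and so does `d · exp (2 s / k_o)`; as `|s| ≤ M`, `d` shrinks at most by
the factor `exp (4 M / k_o)`, and `φ` stays above that factor times its entry value.
-/

open Filter
open scoped RealInnerProductSpace

local notation "E" => EuclideanSpace ℝ (Fin 3)

open Set Real

section Normalize

variable {F : Type*} [NormedAddCommGroup F] [InnerProductSpace ℝ F]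

theorem HasDerivAt.norm {f : ℝ → F} {f' : F} {t : ℝ} (hf : HasDerivAt f f' t) (h0 : f t ≠ 0) :
    HasDerivAt (fun u => ‖f u‖) (⟪f t, f'⟫ / ‖f t‖) t := by
  have hN : ‖f t‖ ^ 2 ≠ 0 := pow_ne_zero 2 (norm_ne_zero_iff.2 h0)
  have h := (Real.hasDerivAt_sqrt hN).comp t hf.norm_sq
  simp only [Function.comp_def, Real.sqrt_sq (norm_nonneg _)] at h
  refine h.congr_deriv ?_
  field_simp

theorem HasDerivAt.inv_norm_smul {f : ℝ → F} {f' : F} {t : ℝ} (hf : HasDerivAt f f' t)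
    (h0 : f t ≠ 0) :
    HasDerivAt (fun u => ‖f u‖⁻¹ • f u) (‖f t‖⁻¹ • f' - (⟪f t, f'⟫ / ‖f t‖ ^ 3) • f t) t := by
  have hN : ‖f t‖ ≠ 0 := norm_ne_zero_iff.2 h0
  refine (((hf.norm h0).inv hN).smul hf).congr_deriv ?_
  rw [sub_eq_add_neg, ← neg_smul, Pi.inv_apply]
  congr 2
  field_simp

theorem norm_inv_norm_smul_sub_le (x v : F) :
    ‖‖x‖⁻¹ • v - (⟪x, v⟫ / ‖x‖ ^ 3) • x‖ ≤ 2 * ‖v‖ / ‖x‖ := by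
  rcases eq_or_ne x 0 with rfl | hx
  · simp
  have hN : 0 < ‖x‖ := norm_pos_iff.2 hx
  calc _ ≤ ‖‖x‖⁻¹ • v‖ + ‖(⟪x, v⟫ / ‖x‖ ^ 3) • x‖ := norm_sub_le _ _
    _ = ‖v‖ / ‖x‖ + |⟪x, v⟫| / ‖x‖ ^ 2 := by
      rw [norm_smul, norm_smul, norm_inv, norm_norm, Real.norm_eq_abs, abs_div,
        abs_of_pos (pow_pos hN 3)]
      field_simp
    _ ≤ ‖v‖ / ‖x‖ + ‖x‖ * ‖v‖ / ‖x‖ ^ 2 := by gcongr; exact abs_real_inner_le_norm x v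
    _ = 2 * ‖v‖ / ‖x‖ := by field_simp; ring

theorem exists_hasDerivAt_inner_inv_norm_smul {e ν : ℝ → F} {e' ν' : F} {t : ℝ}
    (he : HasDerivAt e e' t) (hν : HasDerivAt ν ν' t) (h0 : e t ≠ 0) :
    ∃ a, HasDerivAt (fun u => ⟪‖e u‖⁻¹ • e u, ν u⟫) a t ∧
      |a - ⟪‖e t‖⁻¹ • e t, ν'⟫| ≤ 2 * ‖e'‖ * ‖ν t‖ / ‖e t‖ := by
  refine ⟨_, (he.inv_norm_smul h0).inner ℝ hν, ?_⟩
  rw [add_sub_cancel_left, mul_div_right_comm]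
  exact (abs_real_inner_le_norm _ _).trans
    (mul_le_mul_of_nonneg_right (norm_inv_norm_smul_sub_le _ _) (norm_nonneg _))

end Normalize

section Crossing

variable {f : ℝ → ℝ} {a b c : ℝ}

theorem exists_first_le (hab : a ≤ b) (hf : ContinuousOn f (Icc a b)) (hb : f b ≤ c) :
    ∃ T ∈ Icc a b, f T ≤ c ∧ ∀ u ∈ Ico a T, c < f u := by
  set S := Icc a b ∩ f ⁻¹' Iic c
  have hS : IsClosed S := hf.preimage_isClosed_of_isClosed isClosed_Icc isClosed_Iic
  have hSbdd : BddBelow S := bddBelow_Icc.mono inter_subset_left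
  obtain ⟨hT, hfT⟩ := hS.csInf_mem ⟨b, ⟨hab, le_rfl⟩, hb⟩ hSbdd
  refine ⟨sInf S, hT, hfT, fun u hu => lt_of_not_ge fun hfu => ?_⟩
  exact hu.2.not_ge (csInf_le hSbdd ⟨⟨hu.1, hu.2.le.trans hT.2⟩, hfu⟩)

theorem exists_last_le (hab : a ≤ b) (hf : ContinuousOn f (Icc a b)) (ha : f a ≤ c) :
    ∃ t ∈ Icc a b, f t ≤ c ∧ ∀ u ∈ Ioc t b, c < f u := by
  set S := Icc a b ∩ f ⁻¹' Iic c
  have hS : IsClosed S := hf.preimage_isClosed_of_isClosed isClosed_Icc isClosed_Iic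
  have hSbdd : BddAbove S := bddAbove_Icc.mono inter_subset_left
  obtain ⟨ht, hft⟩ := hS.csSup_mem ⟨a, ⟨le_rfl, hab⟩, ha⟩ hSbdd
  refine ⟨sSup S, ht, hft, fun u hu => lt_of_not_ge fun hfu => ?_⟩
  exact hu.1.not_ge (le_csSup hSbdd ⟨⟨ht.1.trans hu.1.le, hu.2⟩, hfu⟩)

end Crossing

theorem monotoneOn_of_hasDerivAt_nonneg {D : Set ℝ} (hD : Convex ℝ D) {f f' : ℝ → ℝ}
    (hf : ∀ x ∈ D, HasDerivAt f (f' x) x) (hf'₀ : ∀ x ∈ interior D, 0 ≤ f' x) :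
    MonotoneOn f D :=
  monotoneOn_of_hasDerivWithinAt_nonneg hD (fun x hx => (hf x hx).continuousAt.continuousWithinAt)
    (fun x hx => (hf x (interior_subset hx)).hasDerivWithinAt) hf'₀

theorem antitoneOn_of_hasDerivAt_nonpos {D : Set ℝ} (hD : Convex ℝ D) {f f' : ℝ → ℝ}
    (hf : ∀ x ∈ D, HasDerivAt f (f' x) x) (hf'₀ : ∀ x ∈ interior D, f' x ≤ 0) :
    AntitoneOn f D :=
  antitoneOn_of_hasDerivWithinAt_nonpos hD (fun x hx => (hf x hx).continuousAt.continuousWithinAt)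
    (fun x hx => (hf x (interior_subset hx)).hasDerivWithinAt) hf'₀

theorem le_exp_mul_of_mul_exp_le {d₁ d₂ s₁ s₂ α M : ℝ} (hα : 0 ≤ α) (hd₂ : 0 ≤ d₂)
    (hs₁ : |s₁| ≤ M) (hs₂ : |s₂| ≤ M) (h : d₁ * exp (α * s₁) ≤ d₂ * exp (α * s₂)) :
    d₁ ≤ exp (α * (2 * M)) * d₂ := by
  have hexp : exp (α * s₂) ≤ exp (α * s₁) * exp (α * (2 * M)) := by
    rw [← exp_add, exp_le_exp, ← mul_add]
    exact mul_le_mul_of_nonneg_left (by linarith [abs_le.1 hs₁, abs_le.1 hs₂]) hα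
  refine le_of_mul_le_mul_right ?_ (exp_pos (α * s₁))
  calc d₁ * exp (α * s₁) ≤ d₂ * exp (α * s₂) := h
    _ ≤ d₂ * (exp (α * s₁) * exp (α * (2 * M))) := mul_le_mul_of_nonneg_left hexp hd₂
    _ = exp (α * (2 * M)) * d₂ * exp (α * s₁) := by ring

/-- `d` is the distance beyond the safety radius and `s / d` the divergent flow `φ`. -/
structure PerturbedBarrierFlow (d s : ℝ → ℝ) (k C M : ℝ) : Prop where
  continuousOn : ContinuousOn d (Ici 0)
  hasDerivAt : ∀ t ≥ 0, 0 < d t → HasDerivAt d (s t) t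
  differentiableAt : ∀ t ≥ 0, 0 < d t → DifferentiableAt ℝ s t
  abs_deriv_add_le : ∀ t ≥ 0, 0 < d t → |deriv s t + k * (s t / d t)| ≤ C
  abs_rate_le : ∀ t ≥ 0, 0 < d t → |s t| ≤ M

namespace PerturbedBarrierFlow

variable {d s : ℝ → ℝ} {k C M : ℝ}

theorem hasDerivAt_mul_exp (h : PerturbedBarrierFlow d s k C M) {t : ℝ} (ht : 0 ≤ t)
    (hdt : 0 < d t) (α β : ℝ) :
    HasDerivAt (fun u => d u * exp (α * s u + β * u))
      (exp (α * s t + β * t) * d t * (s t / d t + α * deriv s t + β)) t := by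
  have hs : HasDerivAt (fun u => α * s u + β * u) (α * deriv s t + β * 1) t :=
    ((h.differentiableAt t ht hdt).hasDerivAt.const_mul α).add ((hasDerivAt_id' t).const_mul β)
  refine ((h.hasDerivAt t ht hdt).fun_mul hs.exp).congr_deriv ?_
  field_simp
  ring

theorem monotoneOn_mul_exp (h : PerturbedBarrierFlow d s k C M) {D : Set ℝ} (hD : Convex ℝ D)
    (hDd : ∀ x ∈ D, 0 ≤ x ∧ 0 < d x) {α β : ℝ}
    (hα : ∀ x ∈ interior D, 0 ≤ s x / d x + α * deriv s x + β) :
    MonotoneOn (fun u => d u * exp (α * s u + β * u)) D :=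
  monotoneOn_of_hasDerivAt_nonneg hD
    (fun x hx => h.hasDerivAt_mul_exp (hDd x hx).1 (hDd x hx).2 α β) fun x hx =>
      have hx' := hDd x (interior_subset hx)
      mul_nonneg (mul_nonneg (exp_pos _).le hx'.2.le) (hα x hx)

theorem bound_nonneg (h : PerturbedBarrierFlow d s k C M) (h0 : 0 < d 0) : 0 ≤ C :=
  (abs_nonneg _).trans (h.abs_deriv_add_le 0 le_rfl h0)

theorem pos (h : PerturbedBarrierFlow d s k C M) (hk : 0 < k) (h0 : 0 < d 0) :
    ∀ t ≥ 0, 0 < d t := by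
  intro t₂ ht₂
  by_contra! hd₂
  obtain ⟨T, ⟨hT0, -⟩, hdT, hpos⟩ :=
    exists_first_le ht₂ (h.continuousOn.mono Icc_subset_Ici_self) hd₂
  have hT : 0 < T := hT0.lt_of_ne (by rintro rfl; linarith)
  have hC := h.bound_nonneg h0
  have hmono := h.monotoneOn_mul_exp (convex_Ico 0 T) (fun x hx => ⟨hx.1, hpos x hx⟩)
    (α := k⁻¹) (β := C / k) fun x hx => by
      rw [interior_Ico] at hx
      have hb := neg_abs_le (deriv s x + k * (s x / d x))
      have hdx := h.abs_deriv_add_le x hx.1.le (hpos x ⟨hx.1.le, hx.2⟩)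
      rw [show s x / d x + k⁻¹ * deriv s x + C / k = (deriv s x + k * (s x / d x) + C) / k by
        field_simp; ring]
      exact div_nonneg (by linarith) hk.le
  set δ := d 0 * exp (k⁻¹ * s 0) / exp (k⁻¹ * M + C / k * T)
  have hδ : ∀ u ∈ Ico 0 T, δ ≤ d u := by
    intro u hu
    have hH := hmono ⟨le_rfl, hT⟩ hu hu.1
    simp only [mul_zero, add_zero] at hH
    have hsu := (abs_le.1 (h.abs_rate_le u hu.1 (hpos u hu))).2
    rw [div_le_iff₀ (exp_pos _)]
    refine hH.trans (mul_le_mul_of_nonneg_left (exp_le_exp.2 ?_) (hpos u hu).le)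
    gcongr
    exact hu.2.le
  have hdT' : δ ≤ d T := by
    refine ContinuousWithinAt.closure_le (s := Ico 0 T) ?_ continuousWithinAt_const
      ((h.continuousOn T hT0).mono Ico_subset_Ici_self) hδ
    rw [closure_Ico hT.ne]
    exact right_mem_Icc.2 hT0
  have : 0 < δ := by positivity
  linarith

theorem continuousAt_div (h : PerturbedBarrierFlow d s k C M) {t : ℝ} (ht : 0 ≤ t)
    (hdt : 0 < d t) : ContinuousAt (fun u => s u / d u) t :=
  (h.differentiableAt t ht hdt).continuousAt.div (h.hasDerivAt t ht hdt).continuousAt hdt.ne'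

theorem div_le (h : PerturbedBarrierFlow d s k C M) (hk : 0 < k) (h0 : 0 < d 0) :
    ∀ t ≥ 0, s t / d t ≤ max (C / k) (s 0 / d 0) := by
  have hpos := h.pos hk h0
  have hCk : 0 ≤ C / k := div_nonneg (h.bound_nonneg h0) hk.le
  set K := max (C / k) (s 0 / d 0)
  intro t₂ ht₂
  obtain ⟨t₁, ⟨ht₁, ht₁₂⟩, hφ₁, hφ⟩ := exists_last_le ht₂
    (fun u hu => (h.continuousAt_div hu.1 (hpos u hu.1)).continuousWithinAt) (le_max_right _ _)
  have hD : ∀ x ∈ Icc t₁ t₂, 0 ≤ x ∧ 0 < d x :=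
    fun x hx => ⟨ht₁.trans hx.1, hpos x (ht₁.trans hx.1)⟩
  have hφK : ∀ x ∈ interior (Icc t₁ t₂), C / k < s x / d x := fun x hx => by
    rw [interior_Icc] at hx
    exact (le_max_left _ _).trans_lt (hφ x ⟨hx.1, hx.2.le⟩)
  have hd : d t₁ ≤ d t₂ := by
    refine monotoneOn_of_hasDerivAt_nonneg (convex_Icc t₁ t₂)
      (fun x hx => h.hasDerivAt x (hD x hx).1 (hD x hx).2) (fun x hx => ?_)
      ⟨le_rfl, ht₁₂⟩ ⟨ht₁₂, le_rfl⟩ ht₁₂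
    exact ((div_pos_iff_of_pos_right (hD x (interior_subset hx)).2).1
      (hCk.trans_lt (hφK x hx))).le
  have hs : s t₂ ≤ s t₁ := by
    refine antitoneOn_of_hasDerivAt_nonpos (convex_Icc t₁ t₂)
      (fun x hx => (h.differentiableAt x (hD x hx).1 (hD x hx).2).hasDerivAt) (fun x hx => ?_)
      ⟨le_rfl, ht₁₂⟩ ⟨ht₁₂, le_rfl⟩ ht₁₂
    have hb := le_abs_self (deriv s x + k * (s x / d x))
    have hx' := hD x (interior_subset hx)
    linarith [h.abs_deriv_add_le x hx'.1 hx'.2, (div_lt_iff₀' hk).1 (hφK x hx)]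
  have hd₁ := (hD t₁ ⟨le_rfl, ht₁₂⟩).2
  rw [div_le_iff₀ (hpos t₂ ht₂)]
  calc s t₂ ≤ s t₁ := hs
    _ = s t₁ / d t₁ * d t₁ := (div_mul_cancel₀ _ hd₁.ne').symm
    _ ≤ K * d t₁ := mul_le_mul_of_nonneg_right hφ₁ hd₁.le
    _ ≤ K * d t₂ := mul_le_mul_of_nonneg_left hd (hCk.trans (le_max_left _ _))

theorem neg_le_div (h : PerturbedBarrierFlow d s k C M) (hk : 0 < k) (h0 : 0 < d 0) :
    ∀ t ≥ 0, -(max (2 * C / k) (-(s 0 / d 0)) * exp (4 * M / k)) ≤ s t / d t := by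
  have hpos := h.pos hk h0
  have hC := h.bound_nonneg h0
  set L := max (2 * C / k) (-(s 0 / d 0))
  have hL : 0 ≤ L := (by positivity : 0 ≤ 2 * C / k).trans (le_max_left _ _)
  intro t₂ ht₂
  obtain ⟨t₁, ⟨ht₁, ht₁₂⟩, hφ₁, hφ⟩ := exists_last_le (f := fun u => -(s u / d u)) (c := L) ht₂
    (fun u hu => (h.continuousAt_div hu.1 (hpos u hu.1)).neg.continuousWithinAt)
    (le_max_right _ _)
  have hD : ∀ x ∈ Icc t₁ t₂, 0 ≤ x ∧ 0 < d x :=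
    fun x hx => ⟨ht₁.trans hx.1, hpos x (ht₁.trans hx.1)⟩
  have hφL : ∀ x ∈ interior (Icc t₁ t₂), k * (s x / d x) < -(2 * C) := fun x hx => by
    rw [interior_Icc] at hx
    have := (div_lt_iff₀' hk).1 ((le_max_left (2 * C / k) _).trans_lt (hφ x ⟨hx.1, hx.2.le⟩))
    rw [mul_neg] at this
    exact lt_neg_of_lt_neg this
  have hs : s t₁ ≤ s t₂ := by
    refine monotoneOn_of_hasDerivAt_nonneg (convex_Icc t₁ t₂)
      (fun x hx => (h.differentiableAt x (hD x hx).1 (hD x hx).2).hasDerivAt) (fun x hx => ?_)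
      ⟨le_rfl, ht₁₂⟩ ⟨ht₁₂, le_rfl⟩ ht₁₂
    have hb := neg_abs_le (deriv s x + k * (s x / d x))
    have hx' := hD x (interior_subset hx)
    linarith [h.abs_deriv_add_le x hx'.1 hx'.2, hφL x hx]
  have hY := h.monotoneOn_mul_exp (convex_Icc t₁ t₂) hD (α := 2 / k) (β := 0) fun x hx => by
    have hb := neg_abs_le (deriv s x + k * (s x / d x))
    have hx' := hD x (interior_subset hx)
    rw [show s x / d x + 2 / k * deriv s x + 0 = (k * (s x / d x) + 2 * deriv s x) / k by
      field_simp; ring]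
    exact div_nonneg (by linarith [h.abs_deriv_add_le x hx'.1 hx'.2, hφL x hx]) hk.le
  have hd : d t₁ ≤ exp (4 * M / k) * d t₂ := by
    have hY₁₂ := hY ⟨le_rfl, ht₁₂⟩ ⟨ht₁₂, le_rfl⟩ ht₁₂
    simp only [zero_mul, add_zero] at hY₁₂
    rw [show 4 * M / k = 2 / k * (2 * M) by ring]
    exact le_exp_mul_of_mul_exp_le (by positivity) (hpos t₂ ht₂).le
      (h.abs_rate_le t₁ ht₁ (hD t₁ ⟨le_rfl, ht₁₂⟩).2) (h.abs_rate_le t₂ ht₂ (hpos t₂ ht₂)) hY₁₂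
  have hd₁ := (hD t₁ ⟨le_rfl, ht₁₂⟩).2
  rw [le_div_iff₀ (hpos t₂ ht₂)]
  calc -(L * exp (4 * M / k)) * d t₂ = -L * (exp (4 * M / k) * d t₂) := by ring
    _ ≤ -L * d t₁ := mul_le_mul_of_nonpos_left hd (neg_nonpos.2 hL)
    _ ≤ s t₁ / d t₁ * d t₁ := mul_le_mul_of_nonneg_right (neg_le.1 hφ₁) hd₁.le
    _ = s t₁ := div_mul_cancel₀ _ hd₁.ne'
    _ ≤ s t₂ := hs

theorem exists_abs_div_le (h : PerturbedBarrierFlow d s k C M) (hk : 0 < k) (h0 : 0 < d 0) :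
    ∃ B, ∀ t ≥ 0, |s t / d t| ≤ B :=
  ⟨max (max (C / k) (s 0 / d 0)) (max (2 * C / k) (-(s 0 / d 0)) * exp (4 * M / k)),
    fun t ht => abs_le.2 ⟨(neg_le_neg (le_max_right _ _)).trans (h.neg_le_div hk h0 t ht),
      (h.div_le hk h0 t ht).trans (le_max_left _ _)⟩⟩

end PerturbedBarrierFlow

theorem norm_apply_add_div_norm_le {F : Type*} [NormedAddCommGroup F] [NormedSpace ℝ F]
    {Ω : F →L[ℝ] F} {x v : F} {MΩ M r : ℝ} (hΩ : ‖Ω‖ ≤ MΩ) (hv : ‖v‖ ≤ M) (hr : 0 < r)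
    (hx : r < ‖x‖) : ‖Ω x + v‖ / ‖x‖ ≤ MΩ + M / r := by
  rw [div_le_iff₀ (hr.trans hx)]
  calc ‖Ω x + v‖ ≤ MΩ * ‖x‖ + M :=
        (norm_add_le _ _).trans (add_le_add (Ω.le_of_opNorm_le hΩ x) hv)
    _ ≤ (MΩ + M / r) * ‖x‖ := by
      rw [add_mul, div_mul_eq_mul_div]
      gcongr
      exact (le_div_iff₀ hr).2 (mul_le_mul_of_nonneg_left hx.le ((norm_nonneg v).trans hv))

theorem PerturbedBarrierFlow.of_closed_loop {F : Type*} [NormedAddCommGroup F]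
    [InnerProductSpace ℝ F] {e ν g ρ : ℝ → F} {d : ℝ → ℝ} {Ω : ℝ → F →L[ℝ] F} {r k MΩ M B : ℝ}
    (hd : ∀ t, d t = ‖e t‖ - r) (hg : ∀ t, g t = ‖e t‖⁻¹ • e t) (hr : 0 < r)
    (hΩ : ∀ t, ‖Ω t‖ ≤ MΩ) (hskew : ∀ t x, ⟪Ω t x, x⟫ = 0) (he_cont : ContinuousOn e (Ici 0))
    (he : ∀ t ≥ 0, 0 < d t → HasDerivAt e (Ω t (e t) + ν t) t)
    (hν : ∀ t ≥ 0, 0 < d t → HasDerivAt ν (ρ t - (k * (⟪g t, ν t⟫ / d t)) • g t) t)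
    (hρ : ∀ t ≥ 0, 0 < d t → ‖ρ t‖ ≤ B) (hνM : ∀ t ≥ 0, ‖ν t‖ ≤ M) :
    PerturbedBarrierFlow d (fun t => ⟪g t, ν t⟫) k (2 * (MΩ + M / r) * M + B) M := by
  have he0 : ∀ t, 0 < d t → e t ≠ 0 := fun t hdt =>
    norm_pos_iff.1 (hr.trans (by linarith [hd t]))
  have hg1 : ∀ t, 0 < d t → ‖g t‖ = 1 := fun t hdt => by
    rw [hg t]; exact norm_smul_inv_norm (he0 t hdt)
  have hs : ∀ t ≥ 0, 0 < d t → ∃ a, HasDerivAt (fun u => ⟪g u, ν u⟫) a t ∧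
      |a + k * (⟪g t, ν t⟫ / d t)| ≤ 2 * (MΩ + M / r) * M + B := by
    intro t ht hdt
    obtain ⟨a, ha, hab⟩ :=
      exists_hasDerivAt_inner_inv_norm_smul (he t ht hdt) (hν t ht hdt) (he0 t hdt)
    simp only [← hg] at ha hab
    refine ⟨a, ha, ?_⟩
    rw [inner_sub_right, real_inner_smul_right, real_inner_self_eq_norm_sq, hg1 t hdt, one_pow,
      mul_one] at hab
    have hN : r < ‖e t‖ := by linarith [hd t]
    have he' := norm_apply_add_div_norm_le (hΩ t) (hνM t ht) hr hN
    have hgρ : |⟪g t, ρ t⟫| ≤ B :=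
      (abs_real_inner_le_norm _ _).trans (by rw [hg1 t hdt, one_mul]; exact hρ t ht hdt)
    calc |a + k * (⟪g t, ν t⟫ / d t)|
        = |(a - (⟪g t, ρ t⟫ - k * (⟪g t, ν t⟫ / d t))) + ⟪g t, ρ t⟫| := by ring_nf
      _ ≤ 2 * ‖Ω t (e t) + ν t‖ * ‖ν t‖ / ‖e t‖ + B := (abs_add_le _ _).trans (add_le_add hab hgρ)
      _ ≤ 2 * (MΩ + M / r) * M + B := by
        rw [mul_div_right_comm, mul_div_assoc]
        gcongr
        · exact mul_nonneg zero_le_two ((div_nonneg (norm_nonneg _) (norm_nonneg _)).trans he')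
        · exact hνM t ht
  refine
    { continuousOn := ?_
      hasDerivAt := fun t ht hdt => ?_
      differentiableAt := fun t ht hdt => ?_
      abs_deriv_add_le := fun t ht hdt => ?_
      abs_rate_le := fun t ht hdt =>
        (abs_real_inner_le_norm _ _).trans (by rw [hg1 t hdt, one_mul]; exact hνM t ht) }
  · rw [funext hd]
    exact he_cont.norm.sub continuousOn_const
  · rw [funext hd]
    refine (((he t ht hdt).norm (he0 t hdt)).sub_const r).congr_deriv ?_
    rw [inner_add_right, real_inner_comm, hskew, zero_add, hg t, real_inner_smul_left,
      div_eq_inv_mul]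
  · obtain ⟨a, ha, -⟩ := hs t ht hdt
    exact ha.differentiableAt
  · obtain ⟨a, ha, hab⟩ := hs t ht hdt
    rwa [ha.deriv]

theorem norm_neg_apply_sub_smul_sub_smul_sub_le {F : Type*} [NormedAddCommGroup F]
    [NormedSpace ℝ F] (Ω : F →L[ℝ] F) (a b : ℝ) (x ν w : F) :
    ‖-(Ω ν) - a • x - b • ν - w‖ ≤ ‖Ω‖ * ‖ν‖ + |a| * ‖x‖ + |b| * ‖ν‖ + ‖w‖ := by
  refine (norm_sub_le _ _).trans (add_le_add_left ((norm_sub_le _ _).trans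
    (add_le_add ((norm_sub_le _ _).trans (add_le_add ?_ ?_)) ?_)) _)
  · rw [norm_neg]; exact Ω.le_opNorm ν
  all_goals rw [norm_smul, Real.norm_eq_abs]

theorem perturbed_collision_avoidance_general
    (r k_p k_v k_o ε η : ℝ)
    (hr : 0 < r) (hkp : 0 < k_p) (hkv : 0 < k_v) (hko : 0 < k_o)
    (hε : 0 < ε)
    (h_p h_v : ℝ → ℝ)
    (hhp_bd : ∀ s, ε ≤ h_p s ∧ h_p s ≤ η) (hhv_bd : ∀ s, ε ≤ h_v s ∧ h_v s ≤ η)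
    (Ω : ℝ → E →L[ℝ] E) (hΩbdd : ∃ M, ∀ t, ‖Ω t‖ ≤ M)
    (hΩskew : ∀ t (x y : E), ⟪Ω t x, y⟫ = -⟪x, Ω t y⟫)
    (estar : ℝ → E) (hestar : Differentiable ℝ estar)
    (hestar_dyn : ∀ t, deriv estar t = Ω t (estar t))
    (w : ℝ → E) (hw_bdd : ∃ M, ∀ t, ‖w t‖ ≤ M)
    (etil νtil : ℝ → E)
    (hetil : Differentiable ℝ etil) (hνtil : Differentiable ℝ νtil)
    (e : ℝ → E) (he : ∀ t, e t = etil t + estar t)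
    (d : ℝ → ℝ) (hd : ∀ t, d t = ‖e t‖ - r)
    (g : ℝ → E) (hg : ∀ t, g t = ‖e t‖⁻¹ • e t)
    (φ : ℝ → ℝ) (hφ : ∀ t, φ t = ⟪g t, νtil t⟫ / d t)
    (heq : ∀ t ≥ (0:ℝ), 0 < d t →
      deriv etil t = Ω t (etil t) + νtil t ∧
      deriv νtil t = -(Ω t (νtil t)) - (k_p * h_p (‖etil t‖ ^ 2)) • etil t
        - (k_v * h_v ‖νtil t‖) • νtil t - (k_o * φ t) • g t - w t)
    (hbdd : ∃ M, ∀ t ≥ (0:ℝ), ‖etil t‖ ≤ M ∧ ‖νtil t‖ ≤ M)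
    (hd0 : 0 < d 0) :
    (∀ t ≥ (0:ℝ), 0 < d t) ∧ ∃ M, ∀ t ≥ (0:ℝ), |φ t| ≤ M := by
  obtain ⟨M, hM⟩ := hbdd
  obtain ⟨MΩ, hMΩ⟩ := hΩbdd
  obtain ⟨Mw, hMw⟩ := hw_bdd
  have he_eq : e = etil + estar := funext he
  have he_diff : Differentiable ℝ e := he_eq ▸ hetil.add hestar
  have hgain : ∀ {κ m : ℝ}, 0 < κ → ε ≤ m → m ≤ η → |κ * m| ≤ κ * η := fun hκ hεm hmη => by
    rw [abs_of_pos (mul_pos hκ (hε.trans_le hεm))]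
    exact mul_le_mul_of_nonneg_left hmη hκ.le
  have hflow : PerturbedBarrierFlow d (fun t => ⟪g t, νtil t⟫) k_o
      (2 * (MΩ + M / r) * M + (MΩ * M + k_p * η * M + k_v * η * M + Mw)) M := by
    refine .of_closed_loop (ρ := fun t => -(Ω t (νtil t)) - (k_p * h_p (‖etil t‖ ^ 2)) • etil t
        - (k_v * h_v ‖νtil t‖) • νtil t - w t)
      hd hg hr hMΩ (fun t x => by linarith [hΩskew t x x, real_inner_comm x (Ω t x)])
      he_diff.continuous.continuousOn (fun t ht hdt => ?_) (fun t ht hdt => ?_)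
      (fun t ht hdt => ?_) (fun t ht => (hM t ht).2)
    · have h := (hetil t).hasDerivAt.add (hestar t).hasDerivAt
      rw [(heq t ht hdt).1, hestar_dyn, ← he_eq] at h
      exact h.congr_deriv (by rw [he t, map_add]; abel)
    · have h := (hνtil t).hasDerivAt
      rw [(heq t ht hdt).2, hφ t] at h
      exact h.congr_deriv (by abel)
    · refine (norm_neg_apply_sub_smul_sub_smul_sub_le _ _ _ _ _ _).trans ?_
      have hp := fun s => hgain hkp (hhp_bd s).1 (hhp_bd s).2
      have hv := fun s => hgain hkv (hhv_bd s).1 (hhv_bd s).2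
      gcongr
      exacts [(norm_nonneg _).trans (hMΩ 0), hMΩ t, (hM t ht).2, (abs_nonneg _).trans (hp 0), hp _,
        (hM t ht).1, (abs_nonneg _).trans (hv 0), hv _, (hM t ht).2, hMw t]
  refine ⟨hflow.pos hko hd0, ?_⟩
  obtain ⟨B, hB⟩ := hflow.exists_abs_div_le hko hd0
  exact ⟨B, fun t ht => hφ t ▸ hB t ht⟩

/-- Item 1 of Proposition 1: for the fully distributed controller, the edge
error dynamics are perturbed by a bounded continuous signal `w`; still, if
`d 0 > 0` then `d` stays positive for all `t ≥ 0` and the divergent flow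
`φ` is bounded on `[0, ∞)`. -/
theorem perturbed_collision_avoidance
    (r c k_p k_v k_o ε η : ℝ)
    (hr : 0 < r) (hc : r < c) (hkp : 0 < k_p) (hkv : 0 < k_v) (hko : 0 < k_o)
    (hε : 0 < ε) (hεη : ε < η)
    (h_p h_v : ℝ → ℝ) (hhp : ContDiff ℝ 1 h_p) (hhv : ContDiff ℝ 1 h_v)
    (hhp_bd : ∀ s, ε ≤ h_p s ∧ h_p s ≤ η) (hhv_bd : ∀ s, ε ≤ h_v s ∧ h_v s ≤ η)
    (Ω : ℝ → E →L[ℝ] E) (hΩc : Continuous Ω) (hΩbdd : ∃ M, ∀ t, ‖Ω t‖ ≤ M)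
    (hΩskew : ∀ t (x y : E), ⟪Ω t x, y⟫ = -⟪x, Ω t y⟫)
    (estar : ℝ → E) (hestar : Differentiable ℝ estar)
    (hestar_norm : ∀ t, ‖estar t‖ = c)
    (hestar_dyn : ∀ t, deriv estar t = Ω t (estar t))
    (w : ℝ → E) (hw_cont : Continuous w) (hw_bdd : ∃ M, ∀ t, ‖w t‖ ≤ M)
    (etil νtil : ℝ → E)
    (hetil : Differentiable ℝ etil) (hνtil : Differentiable ℝ νtil)
    (e : ℝ → E) (he : ∀ t, e t = etil t + estar t)
    (d : ℝ → ℝ) (hd : ∀ t, d t = ‖e t‖ - r)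
    (g : ℝ → E) (hg : ∀ t, g t = ‖e t‖⁻¹ • e t)
    (φ : ℝ → ℝ) (hφ : ∀ t, φ t = ⟪g t, νtil t⟫ / d t)
    (heq : ∀ t ≥ (0:ℝ), 0 < d t →
      deriv etil t = Ω t (etil t) + νtil t ∧
      deriv νtil t = -(Ω t (νtil t)) - (k_p * h_p (‖etil t‖ ^ 2)) • etil t
        - (k_v * h_v ‖νtil t‖) • νtil t - (k_o * φ t) • g t - w t)
    (hbdd : ∃ M, ∀ t ≥ (0:ℝ), ‖etil t‖ ≤ M ∧ ‖νtil t‖ ≤ M)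
    (hd0 : 0 < d 0) :
    (∀ t ≥ (0:ℝ), 0 < d t) ∧ ∃ M, ∀ t ≥ (0:ℝ), |φ t| ≤ M :=
  perturbed_collision_avoidance_general r k_p k_v k_o ε η hr hkp hkv hko hε h_p h_v hhp_bd hhv_bd Ω
    hΩbdd hΩskew estar hestar hestar_dyn w hw_bdd etil νtil hetil hνtil e he d hd g hg φ hφ heq hbdd
    hd0
end
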